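/- arXiv:2111.08328 — 5 statements merged into one kernel-verified Lean document; each statement's English description precedes it below -/
import Mathlib

section
/- Let (D,𝕋) be a trip network, let S be a schedule of (D,𝕋), and let C be a weighted directed multigraph obtained from D by arbitrarily modifying only the (positive) weights of the edges of D, with 𝕋 regarded as the same collection of walks in C. Then the S-reachability of (D,𝕋) is equal to the S-reachability of (C,𝕋). -/
/-- A weighted directed edge of a weighted directed multigraph. -/
structure DEdge (V : Type) where
  tail : V
  head : V
  weight : ℝ

/-- A temporal edge: tail, head, starting time and (positive) travel time. -/
structure TEdge (V : Type) where
  tail : V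
  head : V
  time : ℝ
  travel : ℝ

/-- A trip: a nonempty walk, i.e. consecutive edges match head-to-tail. -/
def IsWalk {V : Type} (T : List (DEdge V)) : Prop :=
  T ≠ [] ∧ T.Chain' fun e f => e.head = f.tail

/-- A trip network: every trip is a walk with positive weights, and every node
appears in some trip (the edges of `D` are exactly the edges of the trips). -/
def IsTripNetwork {V : Type} (trips : List (List (DEdge V))) : Prop :=
  (∀ T ∈ trips, IsWalk T ∧ ∀ e ∈ T, 0 < e.weight) ∧
  ∀ v : V, ∃ T ∈ trips, ∃ e ∈ T, e.tail = v ∨ e.head = v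

/-- A temporal path from `u` to `v` in the temporal graph `G`. -/
def IsTemporalPath {V : Type} (G : Set (TEdge V)) (p : List (TEdge V)) (u v : V) : Prop :=
  p ≠ [] ∧ (∀ f ∈ p, f ∈ G) ∧
  (p.Chain' fun e f => e.head = f.tail ∧ e.time + e.travel ≤ f.time) ∧
  p.head?.map TEdge.tail = some u ∧ p.getLast?.map TEdge.head = some v

/-- Temporal reachability (every node temporally reaches itself). -/
def TReachable {V : Type} (G : Set (TEdge V)) (u v : V) : Prop :=
  u = v ∨ ∃ p, IsTemporalPath G p u v

/-- The temporal edges induced by a trip with starting time `t`. -/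
def tripTEdges {V : Type} : List (DEdge V) → ℝ → List (TEdge V)
  | [], _ => []
  | e :: es, t => ⟨e.tail, e.head, t, e.weight⟩ :: tripTEdges es (t + e.weight)

/-- The temporal graph induced by a temporalisation `τ` assigning a starting
time to each trip (index) of the collection. -/
def inducedTG {V : Type} (trips : List (List (DEdge V))) (τ : ℕ → ℝ) : Set (TEdge V) :=
  { f | ∃ i : Fin trips.length, f ∈ tripTEdges (trips.get i) (τ i.1) }

/-- The duration of a trip: the sum of the weights of its edges. -/
def tripDuration {V : Type} (T : List (DEdge V)) : ℝ :=
  (T.map DEdge.weight).sum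

/-- Starting time of the `i`-th trip of a schedule: the sum of the durations of
the previous trips. -/
def scheduleTimes {V : Type} (S : List (List (DEdge V))) (i : ℕ) : ℝ :=
  ((S.take i).map tripDuration).sum

/-- The temporal graph induced by a schedule (an ordering of the trips). -/
def scheduleTG {V : Type} (S : List (List (DEdge V))) : Set (TEdge V) :=
  inducedTG S (scheduleTimes S)

/-- The number of ordered pairs `(u, v)` of nodes such that `v` is temporally
reachable from `u` in `G`. -/
noncomputable def reachCount {V : Type} [Fintype V] (G : Set (TEdge V)) : ℕ :=
  Nat.card {p : V × V // TReachable G p.1 p.2}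

/-- `(s,t)`-temporalisability. -/
def Temporalisable {V : Type} (trips : List (List (DEdge V))) (s t : V) : Prop :=
  ∃ τ : ℕ → ℝ, TReachable (inducedTG trips τ) s t

/-- Strong temporalisability. -/
def StronglyTemporalisable {V : Type} (trips : List (List (DEdge V))) : Prop :=
  ∀ s t : V, Temporalisable trips s t

/-- The sequence of nodes visited by a trip. -/
def tripNodes {V : Type} (T : List (DEdge V)) : List V :=
  T.map DEdge.tail ++ (T.getLast?.map DEdge.head).toList

/-- A symmetric trip collection: the trips can be grouped into disjoint pairs
`(T, T̄)` where `T̄` visits the same nodes as `T` in reverse order. -/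
def IsSymmetricTrips {V : Type} (trips : List (List (DEdge V))) : Prop :=
  ∃ ps : List (List (DEdge V) × List (DEdge V)),
    trips.Perm (ps.flatMap fun p => [p.1, p.2]) ∧
    ∀ p ∈ ps, tripNodes p.2 = (tripNodes p.1).reverse

/-- Reachability by a walk in the underlying multidigraph. -/
def DReachable {V : Type} (trips : List (List (DEdge V))) (u v : V) : Prop :=
  Relation.ReflTransGen (fun a b => ∃ T ∈ trips, ∃ e ∈ T, e.tail = a ∧ e.head = b) u v

section Aux

variable {V : Type}

/-- A slot: a position of an edge within a schedule. -/
structure SSlot (S : List (List (DEdge V))) where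
  i : ℕ
  k : ℕ
  hi : i < S.length
  hk : k < (S.get ⟨i, hi⟩).length

namespace SSlot

variable {S : List (List (DEdge V))}

def dedge (s : SSlot S) : DEdge V := (S.get ⟨s.i, s.hi⟩).get ⟨s.k, s.hk⟩

def time (s : SSlot S) : ℝ :=
  scheduleTimes S s.i + tripDuration ((S.get ⟨s.i, s.hi⟩).take s.k)

def tedge (s : SSlot S) : TEdge V :=
  ⟨s.dedge.tail, s.dedge.head, s.time, s.dedge.weight⟩

end SSlot

lemma mem_tripTEdges_iff (T : List (DEdge V)) (t : ℝ) (f : TEdge V) :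
    f ∈ tripTEdges T t ↔ ∃ (k : ℕ) (hk : k < T.length),
      f = ⟨(T.get ⟨k, hk⟩).tail, (T.get ⟨k, hk⟩).head,
           t + tripDuration (T.take k), (T.get ⟨k, hk⟩).weight⟩ := by
  induction T generalizing t with
  | nil => simp [tripTEdges]
  | cons e es ih =>
    simp only [tripTEdges, List.mem_cons, ih]
    constructor
    · rintro (rfl | ⟨k, hk, rfl⟩)
      · exact ⟨0, by simp, by simp [tripDuration]⟩
      · exact ⟨k + 1, Nat.succ_lt_succ hk, by simp [tripDuration, add_assoc]⟩
    · rintro ⟨k, hk, rfl⟩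
      match k with
      | 0 => left; simp [tripDuration]
      | k + 1 =>
        right
        exact ⟨k, Nat.lt_of_succ_lt_succ hk, by simp [tripDuration, add_assoc]⟩

lemma mem_scheduleTG_iff (S : List (List (DEdge V))) (f : TEdge V) :
    f ∈ scheduleTG S ↔ ∃ s : SSlot S, f = s.tedge := by
  constructor
  · rintro ⟨i, hf⟩
    rw [mem_tripTEdges_iff] at hf
    obtain ⟨k, hk, rfl⟩ := hf
    exact ⟨⟨i.1, k, i.2, hk⟩, rfl⟩
  · rintro ⟨s, rfl⟩
    exact ⟨⟨s.i, s.hi⟩, (mem_tripTEdges_iff _ _ _).2 ⟨s.k, s.hk, rfl⟩⟩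

lemma tripDuration_nonneg {T : List (DEdge V)} (h : ∀ e ∈ T, 0 < e.weight) :
    0 ≤ tripDuration T := by
  apply List.sum_nonneg
  simp only [List.mem_map, forall_exists_index, and_imp]
  rintro _ e he rfl
  exact (h e he).le

lemma tripDuration_take_succ (T : List (DEdge V)) (k : ℕ) (hk : k < T.length) :
    tripDuration (T.take (k + 1)) =
      tripDuration (T.take k) + (T.get ⟨k, hk⟩).weight := by
  unfold tripDuration
  rw [List.map_take, List.map_take, List.sum_take_succ _ k (by simpa using hk)]
  simp

lemma tripDuration_take_le {T : List (DEdge V)} (h : ∀ e ∈ T, 0 < e.weight)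
    {m n : ℕ} (hmn : m ≤ n) :
    tripDuration (T.take m) ≤ tripDuration (T.take n) := by
  have heq : T.take n = T.take m ++ (T.drop m).take (n - m) := by
    rw [← List.take_add, Nat.add_sub_cancel' hmn]
  rw [heq]
  unfold tripDuration
  rw [List.map_append, List.sum_append]
  have : 0 ≤ (((T.drop m).take (n - m)).map DEdge.weight).sum := by
    apply List.sum_nonneg
    simp only [List.mem_map, forall_exists_index, and_imp]
    rintro _ e he rfl
    exact (h e (List.mem_of_mem_drop (List.mem_of_mem_take he))).le
  linarith

lemma tripDuration_take_le_full {T : List (DEdge V)} (h : ∀ e ∈ T, 0 < e.weight)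
    (m : ℕ) : tripDuration (T.take m) ≤ tripDuration T := by
  rcases le_or_gt m T.length with hm | hm
  · have := tripDuration_take_le h (le_refl T.length)
    calc tripDuration (T.take m) ≤ tripDuration (T.take T.length) :=
          tripDuration_take_le h hm
      _ = tripDuration T := by rw [List.take_length]
  · rw [List.take_of_length_le hm.le]

lemma scheduleTimes_succ (S : List (List (DEdge V))) (i : ℕ) (hi : i < S.length) :
    scheduleTimes S (i + 1) = scheduleTimes S i + tripDuration (S.get ⟨i, hi⟩) := by
  unfold scheduleTimes
  rw [List.map_take, List.map_take, List.sum_take_succ _ i (by simpa using hi)]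
  simp

lemma scheduleTimes_mono {S : List (List (DEdge V))}
    (hpos : ∀ T ∈ S, ∀ e ∈ T, 0 < e.weight) {m n : ℕ} (hmn : m ≤ n) :
    scheduleTimes S m ≤ scheduleTimes S n := by
  induction n with
  | zero => simp_all
  | succ n ih =>
    rcases Nat.lt_succ_iff_lt_or_eq.mp (Nat.lt_succ_of_le hmn) with h | rfl
    · rcases le_or_gt S.length n with hn | hn
      · have : scheduleTimes S (n+1) = scheduleTimes S n := by
          unfold scheduleTimes
          rw [List.take_of_length_le hn, List.take_of_length_le (by omega)]
        rw [this]; exact ih (Nat.lt_succ_iff.mp h)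
      · rw [scheduleTimes_succ S n hn]
        have := tripDuration_nonneg (hpos _ (List.get_mem S ⟨n, hn⟩))
        have := ih (Nat.lt_succ_iff.mp h)
        linarith
    · exact le_refl _

/-- The key lemma: feasibility of consecutive use of two slots is equivalent to
lexicographic order on slots, independently of the (positive) weights. -/
lemma slot_feasible_iff_lex {S : List (List (DEdge V))}
    (hpos : ∀ T ∈ S, ∀ e ∈ T, 0 < e.weight) (s s' : SSlot S) :
    s.tedge.time + s.tedge.travel ≤ s'.tedge.time ↔
      s.i < s'.i ∨ (s.i = s'.i ∧ s.k < s'.k) := by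
  have hTi := hpos _ (List.get_mem S ⟨s.i, s.hi⟩)
  have hTi' := hpos _ (List.get_mem S ⟨s'.i, s'.hi⟩)
  have harr : s.tedge.time + s.tedge.travel =
      scheduleTimes S s.i + tripDuration ((S.get ⟨s.i, s.hi⟩).take (s.k + 1)) := by
    simp only [SSlot.tedge, SSlot.time, SSlot.dedge]
    rw [tripDuration_take_succ _ s.k s.hk]
    ring
  have ht' : s'.tedge.time =
      scheduleTimes S s'.i + tripDuration ((S.get ⟨s'.i, s'.hi⟩).take s'.k) := rfl
  -- arrival ≤ scheduleTimes (s.i + 1)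
  have harr_le : s.tedge.time + s.tedge.travel ≤ scheduleTimes S (s.i + 1) := by
    rw [harr, scheduleTimes_succ S s.i s.hi]
    have := tripDuration_take_le_full hTi (s.k + 1)
    linarith
  -- time of s' < scheduleTimes (s'.i + 1), strictly
  have ht'_lt : s'.tedge.time < scheduleTimes S (s'.i + 1) := by
    rw [ht', scheduleTimes_succ S s'.i s'.hi]
    have h1 : tripDuration ((S.get ⟨s'.i, s'.hi⟩).take (s'.k + 1)) ≤
        tripDuration (S.get ⟨s'.i, s'.hi⟩) := tripDuration_take_le_full hTi' _
    have h2 := tripDuration_take_succ (S.get ⟨s'.i, s'.hi⟩) s'.k s'.hk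
    have h3 := hTi' _ (List.get_mem _ ⟨s'.k, s'.hk⟩)
    linarith
  -- arrival > scheduleTimes s.i, strictly
  have harr_gt : scheduleTimes S s.i < s.tedge.time + s.tedge.travel := by
    rw [harr]
    have h2 := tripDuration_take_succ (S.get ⟨s.i, s.hi⟩) s.k s.hk
    have h3 := hTi _ (List.get_mem _ ⟨s.k, s.hk⟩)
    have h4 : (0:ℝ) ≤ tripDuration ((S.get ⟨s.i, s.hi⟩).take s.k) :=
      tripDuration_nonneg fun e he => hTi e (List.mem_of_mem_take he)
    linarith
  constructor
  · intro hle
    rcases lt_trichotomy s.i s'.i with h | h | h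
    · exact Or.inl h
    · right
      refine ⟨h, ?_⟩
      by_contra hk
      push_neg at hk
      -- s'.k ≤ s.k : then time s' ≤ scheduleTimes + dur(take s.k) < arrival
      have hcast : S.get ⟨s'.i, s'.hi⟩ = S.get ⟨s.i, s.hi⟩ := by
        congr 1
        exact Fin.ext h.symm
      have : s'.tedge.time < s.tedge.time + s.tedge.travel := by
        rw [ht', harr, hcast, ← h]
        have h1 : tripDuration ((S.get ⟨s.i, s.hi⟩).take s'.k) ≤
            tripDuration ((S.get ⟨s.i, s.hi⟩).take s.k) := tripDuration_take_le hTi hk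
        have h2 := tripDuration_take_succ (S.get ⟨s.i, s.hi⟩) s.k s.hk
        have h3 := hTi _ (List.get_mem _ ⟨s.k, s.hk⟩)
        linarith
      linarith
    · exfalso
      have h1 : scheduleTimes S (s'.i + 1) ≤ scheduleTimes S s.i :=
        scheduleTimes_mono hpos h
      linarith
  · rintro (h | ⟨h, hk⟩)
    · have h1 : scheduleTimes S (s.i + 1) ≤ scheduleTimes S s'.i :=
        scheduleTimes_mono hpos h
      have h2 : (0:ℝ) ≤ tripDuration ((S.get ⟨s'.i, s'.hi⟩).take s'.k) :=
        tripDuration_nonneg fun e he => hTi' e (List.mem_of_mem_take he)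
      rw [ht']; linarith
    · have hcast : S.get ⟨s'.i, s'.hi⟩ = S.get ⟨s.i, s.hi⟩ := by
        congr 1
        exact Fin.ext h.symm
      rw [ht', harr, hcast, ← h]
      have h1 : tripDuration ((S.get ⟨s.i, s.hi⟩).take (s.k + 1)) ≤
          tripDuration ((S.get ⟨s.i, s.hi⟩).take s'.k) := tripDuration_take_le hTi hk
      linarith

end Aux


section Transfer

variable {V : Type}

/-- Transferring a temporal path along a shape-preserving reweighting. -/
lemma treach_mono {S S' : List (List (DEdge V))}
    (hsh : List.Forall₂ (List.Forall₂ fun e e' => e.tail = e'.tail ∧ e.head = e'.head) S S')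
    (hpos : ∀ T ∈ S, ∀ e ∈ T, 0 < e.weight)
    (hpos' : ∀ T ∈ S', ∀ e ∈ T, 0 < e.weight)
    {u v : V} (h : TReachable (scheduleTG S) u v) : TReachable (scheduleTG S') u v := by
  obtain ⟨hlen, hget⟩ := List.forall₂_iff_get.mp hsh
  have hlen2 : ∀ (i : ℕ) (hi : i < S.length) (hi' : i < S'.length),
      (S.get ⟨i, hi⟩).length = (S'.get ⟨i, hi'⟩).length :=
    fun i hi hi' => (hget i hi hi').length_eq
  let F : SSlot S → SSlot S' := fun s =>
    ⟨s.i, s.k, hlen ▸ s.hi, by rw [← hlen2 s.i s.hi (hlen ▸ s.hi)]; exact s.hk⟩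
  have hth : ∀ s : SSlot S, s.dedge.tail = (F s).dedge.tail ∧ s.dedge.head = (F s).dedge.head := by
    intro s
    have h2 := hget s.i s.hi (hlen ▸ s.hi)
    exact (List.forall₂_iff_get.mp h2).2 s.k s.hk _
  rcases h with rfl | ⟨p, hne, hmem, hchain, hhd, hlast⟩
  · exact Or.inl rfl
  right
  have hslots : ∀ q : List (TEdge V), (∀ f ∈ q, f ∈ scheduleTG S) →
      ∃ σ : List (SSlot S), q = σ.map SSlot.tedge := by
    intro q
    induction q with
    | nil => exact fun _ => ⟨[], rfl⟩
    | cons f q ih =>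
      intro hq
      obtain ⟨σ, rfl⟩ := ih fun g hg => hq g (List.mem_cons_of_mem f hg)
      obtain ⟨s, rfl⟩ := (mem_scheduleTG_iff S f).mp (hq f (List.mem_cons_self))
      exact ⟨s :: σ, rfl⟩
  obtain ⟨σ, rfl⟩ := hslots p hmem
  refine ⟨σ.map fun s => (F s).tedge, ?_, ?_, ?_, ?_, ?_⟩
  · simpa using hne
  · intro f hf
    obtain ⟨s, _, rfl⟩ := List.mem_map.mp hf
    exact (mem_scheduleTG_iff S' _).mpr ⟨F s, rfl⟩
  · simp only [List.Chain', List.isChain_map] at hchain ⊢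
    refine hchain.imp (fun s s' hss' => ?_)
    obtain ⟨hhead, htime⟩ := hss'
    constructor
    · show (F s).dedge.head = (F s').dedge.tail
      rw [← (hth s).2, ← (hth s').1]
      exact hhead
    · rw [slot_feasible_iff_lex hpos']
      exact (slot_feasible_iff_lex hpos s s').mp htime
  · rw [List.head?_map, Option.map_map] at hhd ⊢
    have heq : (TEdge.tail ∘ fun s : SSlot S => (F s).tedge) = TEdge.tail ∘ SSlot.tedge := by
      funext s; exact ((hth s).1).symm
    rw [heq]; exact hhd
  · rw [List.getLast?_map, Option.map_map] at hlast ⊢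
    have heq : (TEdge.head ∘ fun s : SSlot S => (F s).tedge) = TEdge.head ∘ SSlot.tedge := by
      funext s; exact ((hth s).2).symm
    rw [heq]; exact hlast

end Transfer

/-- Fact 1. Modifying only the (positive) weights of the edges of
`D` does not change the `S`-reachability of a schedule `S`. -/
theorem schedule_reachability_weight_invariant
    {V : Type} [Fintype V] (trips : List (List (DEdge V)))
    (hN : IsTripNetwork trips)
    (S : List (List (DEdge V))) (hS : S.Perm trips)
    (f : DEdge V → ℝ) (hf : ∀ e : DEdge V, 0 < f e) :
    reachCount (scheduleTG S) =
      reachCount (scheduleTG (S.map (List.map fun e => (⟨e.tail, e.head, f e⟩ : DEdge V)))) := by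
  set g : DEdge V → DEdge V := fun e => ⟨e.tail, e.head, f e⟩ with hg
  have hpos : ∀ T ∈ S, ∀ e ∈ T, 0 < e.weight :=
    fun T hT => (hN.1 T (hS.subset hT)).2
  have hpos' : ∀ T ∈ S.map (List.map g), ∀ e ∈ T, 0 < e.weight := by
    intro T' hT' e' he'
    obtain ⟨T, hT, rfl⟩ := List.mem_map.mp hT'
    obtain ⟨e, he, rfl⟩ := List.mem_map.mp he'
    exact hf e
  have hsh : List.Forall₂ (List.Forall₂ fun e e' => e.tail = e'.tail ∧ e.head = e'.head)
      S (S.map (List.map g)) := by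
    rw [List.forall₂_map_right_iff]
    refine List.forall₂_same.mpr fun T _ => ?_
    rw [List.forall₂_map_right_iff]
    exact List.forall₂_same.mpr fun e _ => ⟨rfl, rfl⟩
  have hsh' : List.Forall₂ (List.Forall₂ fun e e' => e.tail = e'.tail ∧ e.head = e'.head)
      (S.map (List.map g)) S := by
    rw [List.forall₂_map_left_iff]
    refine List.forall₂_same.mpr fun T _ => ?_
    rw [List.forall₂_map_left_iff]
    exact List.forall₂_same.mpr fun e _ => ⟨rfl, rfl⟩
  apply Nat.card_congr
  apply Equiv.subtypeEquivRight
  intro p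
  exact ⟨treach_mono hsh hpos hpos', treach_mono hsh' hpos' hpos⟩
end

section
/- Let (D,𝕋) be a symmetric trip network. For any node u, there exists a schedule S of (D,𝕋) such that, for any node v reachable from u by a walk in D, v is S-reachable from u. -/
-- ===== auxiliary development =====
namespace SymAux

variable {V : Type}

/-- Temporal reachability with an arrival-time bound. -/
def TRB (G : Set (TEdge V)) (t : ℝ) (u v : V) : Prop :=
  u = v ∨ ∃ p e, IsTemporalPath G p u v ∧ p.getLast? = some e ∧ e.time + e.travel ≤ t

def totalDur (S : List (List (DEdge V))) : ℝ := (S.map tripDuration).sum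

def PosW (T : List (DEdge V)) : Prop := ∀ e ∈ T, 0 < e.weight

def IsCh (T : List (DEdge V)) : Prop := T.Chain' fun e f => e.head = f.tail

lemma tripDuration_nil : tripDuration ([] : List (DEdge V)) = 0 := by simp [tripDuration]

lemma tripDuration_cons (e : DEdge V) (T : List (DEdge V)) :
    tripDuration (e :: T) = e.weight + tripDuration T := by simp [tripDuration]

lemma tripDuration_append (A B : List (DEdge V)) :
    tripDuration (A ++ B) = tripDuration A + tripDuration B := by simp [tripDuration]

lemma tripDuration_nonneg {T : List (DEdge V)} (h : PosW T) : 0 ≤ tripDuration T := by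
  apply List.sum_nonneg
  intro x hx
  obtain ⟨e, he, rfl⟩ := List.mem_map.1 hx
  exact (h e he).le

lemma totalDur_append (S L : List (List (DEdge V))) :
    totalDur (S ++ L) = totalDur S + totalDur L := by simp [totalDur]

lemma totalDur_nonneg {L : List (List (DEdge V))} (h : ∀ T ∈ L, PosW T) : 0 ≤ totalDur L := by
  apply List.sum_nonneg
  intro x hx
  obtain ⟨T, hT, rfl⟩ := List.mem_map.1 hx
  exact tripDuration_nonneg (h T hT)

lemma tripTEdges_append (A B : List (DEdge V)) (τ : ℝ) :
    tripTEdges (A ++ B) τ = tripTEdges A τ ++ tripTEdges B (τ + tripDuration A) := by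
  induction A generalizing τ with
  | nil => simp [tripTEdges, tripDuration_nil]
  | cons e A ih =>
      rw [List.cons_append]
      show _ :: tripTEdges (A ++ B) (τ + e.weight) = _
      rw [ih, tripDuration_cons, tripTEdges,
        show τ + (e.weight + tripDuration A) = τ + e.weight + tripDuration A by ring]
      simp

lemma TRB_mono {G G' : Set (TEdge V)} {t t' : ℝ} {u v : V}
    (hG : G ⊆ G') (ht : t ≤ t') (h : TRB G t u v) : TRB G' t' u v := by
  rcases h with h | ⟨p, e, ⟨hne, hmem, hch, hh, hl⟩, hge, hle⟩
  · exact Or.inl h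
  · exact Or.inr ⟨p, e, ⟨hne, fun f hf => hG (hmem f hf), hch, hh, hl⟩, hge, le_trans hle ht⟩

lemma TRB_refl (G : Set (TEdge V)) (t : ℝ) (u : V) : TRB G t u u := Or.inl rfl

lemma TRB_to_TReachable {G : Set (TEdge V)} {t : ℝ} {u v : V} (h : TRB G t u v) :
    TReachable G u v := by
  rcases h with h | ⟨p, e, hp, _, _⟩
  · exact Or.inl h
  · exact Or.inr ⟨p, hp⟩

/-- Extend a bounded temporal reachability by one temporal edge. -/
lemma TRB_step {G : Set (TEdge V)} {t : ℝ} {u x : V} (h : TRB G t u x)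
    (f : TEdge V) (hfG : f ∈ G) (hft : f.tail = x) (htf : t ≤ f.time) :
    TRB G (f.time + f.travel) u f.head := by
  rcases h with rfl | ⟨p, e, ⟨hne, hmem, hch, hh, hl⟩, hge, hle⟩
  · refine Or.inr ⟨[f], f, ⟨by simp, by simpa using hfG, List.isChain_singleton _, by simp [hft], by simp⟩,
      by simp, le_refl _⟩
  · refine Or.inr ⟨p ++ [f], f, ⟨by simp, ?_, ?_, ?_, by simp⟩, by simp, le_refl _⟩
    · intro g hg
      rcases List.mem_append.1 hg with hg | hg
      · exact hmem g hg
      · simp only [List.mem_singleton] at hg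
        exact hg ▸ hfG
    · refine List.isChain_append.2 ?_
      refine ⟨hch, by simp, ?_⟩
      intro a ha b hb
      simp only [List.head?_cons, Option.mem_def, Option.some.injEq] at hb
      subst hb
      rw [hge] at ha
      rw [hge] at hl
      simp only [Option.mem_def, Option.some.injEq] at ha
      subst ha
      simp only [Option.map_some, Option.some.injEq] at hl
      exact ⟨by rw [hl, hft], le_trans hle htf⟩
    · rw [show (p ++ [f]).head? = p.head? from List.head?_append_of_ne_nil _ hne]
      exact hh


lemma tripNodes_nil : tripNodes ([] : List (DEdge V)) = [] := by simp [tripNodes]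

lemma tripNodes_append (A B : List (DEdge V)) (hB : B ≠ []) :
    tripNodes (A ++ B) = A.map DEdge.tail ++ tripNodes B := by
  obtain ⟨b, hb⟩ : ∃ b, B.getLast? = some b := by
    cases hx : B.getLast? with
    | none => exact absurd (List.getLast?_eq_none_iff.1 hx) hB
    | some b => exact ⟨b, rfl⟩
  simp [tripNodes, List.getLast?_append, hb]

lemma tripNodes_singleton (e : DEdge V) : tripNodes [e] = [e.tail, e.head] := by
  simp [tripNodes]

lemma tripNodes_cons (e : DEdge V) (T : List (DEdge V)) (hT : T ≠ []) :
    tripNodes (e :: T) = e.tail :: tripNodes T := by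
  have := tripNodes_append [e] T hT
  simpa using this

lemma tripNodes_cons_head (e : DEdge V) (T : List (DEdge V)) :
    (tripNodes (e :: T)).head? = some e.tail := by
  simp [tripNodes]

lemma tripNodes_length {T : List (DEdge V)} (hT : T ≠ []) :
    (tripNodes T).length = T.length + 1 := by
  obtain ⟨b, hb⟩ : ∃ b, T.getLast? = some b := by
    cases hx : T.getLast? with
    | none => exact absurd (List.getLast?_eq_none_iff.1 hx) hT
    | some b => exact ⟨b, rfl⟩
  simp [tripNodes, hb]

lemma tail_mem_tripNodes {T : List (DEdge V)} {e : DEdge V} (he : e ∈ T) :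
    e.tail ∈ tripNodes T :=
  List.mem_append_left _ (List.mem_map.2 ⟨e, he, rfl⟩)

lemma head_mem_tripNodes {T : List (DEdge V)} {e : DEdge V} (hc : IsCh T) (he : e ∈ T) :
    e.head ∈ tripNodes T := by
  obtain ⟨A, B, rfl⟩ := List.append_of_mem he
  cases B with
  | nil =>
      apply List.mem_append_right
      simp [List.getLast?_append]
  | cons f B' =>
      have h1 : IsCh (e :: f :: B') := (List.isChain_append.1 hc).2.1
      have h2 : e.head = f.tail := (List.isChain_cons_cons.1 h1).1
      rw [h2]
      exact tail_mem_tripNodes (by simp)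

/-- Core lemma: starting from the first node of a trip scheduled at time `τ`,
all nodes of the trip become reachable by time `τ + duration`. -/
lemma key (G : Set (TEdge V)) (u : V) :
    ∀ (T : List (DEdge V)) (τ : ℝ) (x : V), IsCh T → PosW T →
    (∀ f ∈ tripTEdges T τ, f ∈ G) → TRB G τ u x →
    (∀ e ∈ T.head?, e.tail = x) →
    ∀ y ∈ tripNodes T, TRB G (τ + tripDuration T) u y := by
  intro T
  induction T with
  | nil => intro τ x _ _ _ _ _ y hy; simp [tripNodes_nil] at hy
  | cons e T' ih =>
      intro τ x hc hw hG hx hhead y hy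
      have hex : e.tail = x := hhead e (by simp)
      have hw0 : 0 < e.weight := hw e (by simp)
      have hf0 : (⟨e.tail, e.head, τ, e.weight⟩ : TEdge V) ∈ G := by
        apply hG
        simp [tripTEdges]
      have hstep : TRB G (τ + e.weight) u e.head :=
        TRB_step hx ⟨e.tail, e.head, τ, e.weight⟩ hf0 hex (le_refl τ)
      have hdur0 : 0 ≤ tripDuration (e :: T') := tripDuration_nonneg hw
      cases T' with
      | nil =>
          rw [tripNodes_singleton] at hy
          simp only [List.mem_cons, List.mem_singleton, List.not_mem_nil, or_false] at hy
          rcases hy with hy | hy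
          · subst hy
            rw [hex]
            exact TRB_mono (le_refl G).subset (le_add_of_nonneg_right hdur0) hx
          · subst hy
            have h1 : τ + tripDuration [e] = τ + e.weight := by
              simp [tripDuration]
            rw [h1]
            exact hstep
      | cons f T'' =>
          rw [tripNodes_cons e (f :: T'') (by simp), List.mem_cons] at hy
          rcases hy with hy | hy
          · subst hy
            rw [hex]
            exact TRB_mono (le_refl G).subset (le_add_of_nonneg_right hdur0) hx
          · have hc' : IsCh (f :: T'') := (List.isChain_cons_cons.1 hc).2
            have hef : e.head = f.tail := (List.isChain_cons_cons.1 hc).1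
            have hres := ih (τ + e.weight) e.head hc'
              (fun g hg => hw g (List.mem_cons_of_mem _ hg))
              (fun g hg => hG g (List.mem_cons_of_mem _ hg))
              hstep
              (by intro g hg; simp at hg; subst hg; exact hef.symm)
              y hy
            have h1 : τ + e.weight + tripDuration (f :: T'') = τ + tripDuration (e :: f :: T'') := by
              simp only [tripDuration_cons]; ring
            rwa [h1] at hres

/-- Segment lemma: if `x` occurs in the nodes of a trip scheduled at `τ` and is
reachable by time `τ`, then all later nodes of the trip are reachable. -/
lemma seg (G : Set (TEdge V)) (u : V) (T : List (DEdge V)) (hc : IsCh T) (hw : PosW T)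
    (τ : ℝ) (hG : ∀ f ∈ tripTEdges T τ, f ∈ G) (x : V) (hx : TRB G τ u x)
    (N₁ N₂ : List V) (hsplit : tripNodes T = N₁ ++ x :: N₂) :
    ∀ y ∈ x :: N₂, TRB G (τ + tripDuration T) u y := by
  have hdur0 : 0 ≤ tripDuration T := tripDuration_nonneg hw
  rcases eq_or_ne T [] with rfl | hT
  · rw [tripNodes_nil] at hsplit
    exact absurd hsplit.symm (by simp)
  have hlen : (tripNodes T).length = T.length + 1 := tripNodes_length hT
  rw [hsplit] at hlen
  simp only [List.length_append, List.length_cons] at hlen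
  have hle : N₁.length ≤ T.length := by omega
  rcases eq_or_lt_of_le hle with heq | hlt
  · have hN2 : N₂ = [] := by
      have : N₂.length = 0 := by omega
      exact List.length_eq_zero_iff.1 this
    subst hN2
    intro y hy
    simp only [List.mem_singleton] at hy
    subst hy
    exact TRB_mono (le_refl G).subset (le_add_of_nonneg_right hdur0) hx
  · have hAB : T.take N₁.length ++ T.drop N₁.length = T := List.take_append_drop _ _
    cases hd : T.drop N₁.length with
    | nil =>
        exfalso
        have h2 := List.length_drop (i := N₁.length) (l := T)
        rw [hd] at h2
        simp only [List.length_nil] at h2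
        omega
    | cons e B' =>
        rw [hd] at hAB
        have hnodes : tripNodes T = (T.take N₁.length).map DEdge.tail ++ tripNodes (e :: B') := by
          conv_lhs => rw [← hAB]
          exact tripNodes_append _ _ (by simp)
        have hlenA : ((T.take N₁.length).map DEdge.tail).length = N₁.length := by
          simp only [List.length_map, List.length_take]
          omega
        have hinj := List.append_inj (hnodes.symm.trans hsplit) hlenA
        have hNB : tripNodes (e :: B') = x :: N₂ := hinj.2
        have hex : e.tail = x := by
          have h3 := tripNodes_cons_head e B'
          rw [hNB] at h3
          simpa using h3.symm
        have hwA : PosW (T.take N₁.length) :=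
          fun g hg => hw g (by rw [← hAB]; exact List.mem_append_left _ hg)
        have hwB : PosW (e :: B') :=
          fun g hg => hw g (by rw [← hAB]; exact List.mem_append_right _ hg)
        have hcB : IsCh (e :: B') := hc.suffix ⟨T.take N₁.length, hAB⟩
        have hdurA : 0 ≤ tripDuration (T.take N₁.length) := tripDuration_nonneg hwA
        have hGB : ∀ f ∈ tripTEdges (e :: B') (τ + tripDuration (T.take N₁.length)), f ∈ G := by
          intro f hf
          apply hG
          rw [← hAB, tripTEdges_append]
          exact List.mem_append_right _ hf
        have hres := key G u (e :: B') (τ + tripDuration (T.take N₁.length)) x hcB hwB hGB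
          (TRB_mono (le_refl G).subset (le_add_of_nonneg_right hdurA) hx)
          (by intro g hg; simp at hg; subst hg; exact hex)
        intro y hy
        rw [← hNB] at hy
        have h4 := hres y hy
        have harith : τ + tripDuration (T.take N₁.length) + tripDuration (e :: B')
            = τ + tripDuration T := by
          conv_rhs => rw [← hAB]
          rw [tripDuration_append]
          ring
        rwa [harith] at h4


lemma scheduleTG_mono_append (S L : List (List (DEdge V))) :
    scheduleTG S ⊆ scheduleTG (S ++ L) := by
  rintro f ⟨i, hf⟩
  have hi : i.1 < (S ++ L).length := by
    have := i.2
    simp only [List.length_append]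
    omega
  refine ⟨⟨i.1, hi⟩, ?_⟩
  have hget : (S ++ L).get ⟨i.1, hi⟩ = S.get i := by
    simp [List.getElem_append_left i.2]
  have htime : scheduleTimes (S ++ L) i.1 = scheduleTimes S i.1 := by
    unfold scheduleTimes
    rw [List.take_append_of_le_length (le_of_lt i.2)]
  rw [hget, htime]
  exact hf

lemma tripT_sub_scheduleTG (S₁ : List (List (DEdge V))) (T : List (DEdge V))
    (S₂ : List (List (DEdge V))) :
    ∀ f ∈ tripTEdges T (totalDur S₁), f ∈ scheduleTG (S₁ ++ T :: S₂) := by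
  intro f hf
  have hi : S₁.length < (S₁ ++ T :: S₂).length := by simp
  refine ⟨⟨S₁.length, hi⟩, ?_⟩
  have hget : (S₁ ++ T :: S₂).get ⟨S₁.length, hi⟩ = T := by
    simp [List.getElem_append_right (le_refl S₁.length)]
  have htime : scheduleTimes (S₁ ++ T :: S₂) S₁.length = totalDur S₁ := by
    unfold scheduleTimes totalDur
    rw [List.take_left]
  rw [hget, htime]
  exact hf

/-- Bounded reachability from `u` within a schedule (arrival by the end). -/
def RB (S : List (List (DEdge V))) (u v : V) : Prop :=
  TRB (scheduleTG S) (totalDur S) u v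

lemma RB_refl (S : List (List (DEdge V))) (u : V) : RB S u u := Or.inl rfl

lemma RB_mono_append {S L : List (List (DEdge V))} (hL : ∀ T ∈ L, PosW T) {u v : V}
    (h : RB S u v) : RB (S ++ L) u v := by
  refine TRB_mono (scheduleTG_mono_append S L) ?_ h
  rw [totalDur_append]
  exact le_add_of_nonneg_right (totalDur_nonneg hL)

/-- The pair lemma: scheduling `T` then its reverse `T'` after `S` makes every
node of `T` reachable, provided some node of `T` was reachable in `S`. -/
lemma pair_reach (S : List (List (DEdge V))) (u : V) (T T' : List (DEdge V))
    (hcT : IsCh T) (hwT : PosW T) (hcT' : IsCh T') (hwT' : PosW T')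
    (hrev : tripNodes T' = (tripNodes T).reverse)
    (x : V) (hx : x ∈ tripNodes T) (h : RB S u x) :
    ∀ y ∈ tripNodes T, RB (S ++ [T, T']) u y := by
  have hdT : 0 ≤ tripDuration T := tripDuration_nonneg hwT
  have hdT' : 0 ≤ tripDuration T' := tripDuration_nonneg hwT'
  have htot : totalDur (S ++ [T, T']) = totalDur S + (tripDuration T + tripDuration T') := by
    rw [totalDur_append]
    simp [totalDur]
  obtain ⟨N₁, N₂, hsplit⟩ := List.append_of_mem hx
  have hx' : TRB (scheduleTG (S ++ [T, T'])) (totalDur S) u x :=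
    TRB_mono (scheduleTG_mono_append S [T, T']) (le_refl _) h
  intro y hy
  rw [hsplit, List.mem_append] at hy
  rcases hy with hy | hy
  · -- y before x in T : use T'
    have hsplit' : tripNodes T' = N₂.reverse ++ x :: N₁.reverse := by
      rw [hrev, hsplit]
      simp
    have hG' : ∀ f ∈ tripTEdges T' (totalDur (S ++ [T])), f ∈ scheduleTG (S ++ [T, T']) := by
      have := tripT_sub_scheduleTG (S ++ [T]) T' []
      simpa using this
    have htot2 : totalDur (S ++ [T]) = totalDur S + tripDuration T := by
      rw [totalDur_append]; simp [totalDur]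
    have hx2 : TRB (scheduleTG (S ++ [T, T'])) (totalDur (S ++ [T])) u x := by
      refine TRB_mono (le_refl _).subset ?_ hx'
      rw [htot2]
      exact le_add_of_nonneg_right hdT
    have hres := seg (scheduleTG (S ++ [T, T'])) u T' hcT' hwT' (totalDur (S ++ [T])) hG'
      x hx2 N₂.reverse N₁.reverse hsplit'
      y (List.mem_cons_of_mem _ (List.mem_reverse.2 hy))
    unfold RB
    refine TRB_mono (le_refl _).subset ?_ hres
    rw [htot, htot2]
    ring_nf
    exact le_refl _
  · -- y at or after x in T : use T
    have hG : ∀ f ∈ tripTEdges T (totalDur S), f ∈ scheduleTG (S ++ [T, T']) := by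
      have := tripT_sub_scheduleTG S T [T']
      simpa using this
    have hres := seg (scheduleTG (S ++ [T, T'])) u T hcT hwT (totalDur S) hG
      x hx' N₁ N₂ hsplit y hy
    unfold RB
    refine TRB_mono (le_refl _).subset ?_ hres
    rw [htot]
    have : totalDur S + tripDuration T ≤ totalDur S + (tripDuration T + tripDuration T') := by
      linarith
    linarith


def Good (p : List (DEdge V) × List (DEdge V)) : Prop :=
  IsCh p.1 ∧ IsCh p.2 ∧ PosW p.1 ∧ PosW p.2 ∧ tripNodes p.2 = (tripNodes p.1).reverse

def stepRel (L : List (List (DEdge V))) (a b : V) : Prop :=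
  ∃ T ∈ L, ∃ e ∈ T, e.tail = a ∧ e.head = b

lemma stepRel_mono {L₁ L₂ : List (List (DEdge V))} (h : ∀ T ∈ L₁, T ∈ L₂) {a b : V}
    (hs : stepRel L₁ a b) : stepRel L₂ a b := by
  obtain ⟨T, hT, e, he, hab⟩ := hs
  exact ⟨T, h T hT, e, he, hab⟩

lemma no_touch (ps : List (List (DEdge V) × List (DEdge V))) (S : List (List (DEdge V))) (u : V)
    (hS : ∀ T ∈ S, IsCh T ∧ PosW T)
    (hInv : ∀ T ∈ S, ∀ x ∈ tripNodes T, RB S u x)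
    (h : ∀ p ∈ ps, ∀ x ∈ tripNodes p.1, ¬ RB S u x)
    (hrev : ∀ p ∈ ps, tripNodes p.2 = (tripNodes p.1).reverse) :
    ∀ v, Relation.ReflTransGen (stepRel (S ++ ps.flatMap fun p => [p.1, p.2])) u v →
      RB S u v := by
  intro v hv
  induction hv with
  | refl => exact RB_refl S u
  | tail hab hstep ihr =>
      obtain ⟨T, hT, e, he, het, heh⟩ := hstep
      rcases List.mem_append.1 hT with hT | hT
      · exact heh ▸ hInv T hT e.head (head_mem_tripNodes (hS T hT).1 he)
      · exfalso
        obtain ⟨p, hp, hTp⟩ := List.mem_flatMap.1 hT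
        have hbmem : e.tail ∈ tripNodes p.1 := by
          simp only [List.mem_cons, List.mem_singleton, List.not_mem_nil, or_false] at hTp
          rcases hTp with rfl | rfl
          · exact tail_mem_tripNodes he
          · have := tail_mem_tripNodes (T := p.2) he
            rw [hrev p hp] at this
            exact List.mem_reverse.1 this
        exact h p hp e.tail hbmem (het ▸ ihr)

lemma main_ind (u : V) : ∀ (n : ℕ) (ps : List (List (DEdge V) × List (DEdge V))),
    ps.length ≤ n →
    (∀ p ∈ ps, Good p) →
    ∀ S : List (List (DEdge V)),
    (∀ T ∈ S, IsCh T ∧ PosW T) →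
    (∀ T ∈ S, ∀ x ∈ tripNodes T, RB S u x) →
    ∃ L, L.Perm (ps.flatMap fun p => [p.1, p.2]) ∧
      ∀ v, Relation.ReflTransGen (stepRel (S ++ ps.flatMap fun p => [p.1, p.2])) u v →
        RB (S ++ L) u v := by
  intro n
  induction n with
  | zero =>
      intro ps hlen hps S hS hInv
      have hnil : ps = [] := List.length_eq_zero_iff.1 (Nat.le_zero.1 hlen)
      subst hnil
      refine ⟨[], by simp, ?_⟩
      intro v hv
      have := no_touch [] S u hS hInv (by simp) (by simp) v hv
      simpa using this
  | succ m ih =>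
      intro ps hlen hps S hS hInv
      classical
      by_cases h : ∃ p ∈ ps, ∃ x ∈ tripNodes p.1, RB S u x
      · obtain ⟨p, hp, x, hx, hRB⟩ := h
        obtain ⟨sl, tl, rfl⟩ := List.append_of_mem hp
        have hperm : (sl ++ p :: tl).Perm (p :: (sl ++ tl)) := List.perm_middle
        obtain ⟨hc1, hc2, hw1, hw2, hrv⟩ := hps p hp
        have hwpair : ∀ T ∈ [p.1, p.2], PosW T := by
          intro T hT
          simp only [List.mem_cons, List.mem_singleton, List.not_mem_nil, or_false] at hT
          rcases hT with rfl | rfl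
          · exact hw1
          · exact hw2
        have hall : ∀ y ∈ tripNodes p.1, RB (S ++ [p.1, p.2]) u y :=
          pair_reach S u p.1 p.2 hc1 hw1 hc2 hw2 hrv x hx hRB
        have hS' : ∀ T ∈ S ++ [p.1, p.2], IsCh T ∧ PosW T := by
          intro T hT
          rcases List.mem_append.1 hT with hT | hT
          · exact hS T hT
          · simp only [List.mem_cons, List.mem_singleton, List.not_mem_nil, or_false] at hT
            rcases hT with rfl | rfl
            · exact ⟨hc1, hw1⟩
            · exact ⟨hc2, hw2⟩
        have hInv' : ∀ T ∈ S ++ [p.1, p.2], ∀ y ∈ tripNodes T, RB (S ++ [p.1, p.2]) u y := by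
          intro T hT y hy
          rcases List.mem_append.1 hT with hT | hT
          · exact RB_mono_append hwpair (hInv T hT y hy)
          · simp only [List.mem_cons, List.mem_singleton, List.not_mem_nil, or_false] at hT
            rcases hT with rfl | rfl
            · exact hall y hy
            · refine hall y ?_
              rw [hrv] at hy
              exact List.mem_reverse.1 hy
        have hlen' : (sl ++ tl).length ≤ m := by
          have h1 : (sl ++ p :: tl).length = sl.length + tl.length + 1 := by simp; omega
          have h2 : (sl ++ tl).length = sl.length + tl.length := by simp
          omega
        have hps' : ∀ q ∈ sl ++ tl, Good q := by
          intro q hq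
          refine hps q ?_
          rcases List.mem_append.1 hq with hq | hq
          · exact List.mem_append_left _ hq
          · exact List.mem_append_right _ (List.mem_cons_of_mem _ hq)
        obtain ⟨L', hL'perm, hL'⟩ := ih (sl ++ tl) hlen' hps' (S ++ [p.1, p.2]) hS' hInv'
        have hflatperm : ((sl ++ p :: tl).flatMap fun q => [q.1, q.2]).Perm
            (p.1 :: p.2 :: (sl ++ tl).flatMap fun q => [q.1, q.2]) := by
          have h1 := hperm.flatMap_right (fun q => [q.1, q.2])
          simpa using h1
        refine ⟨p.1 :: p.2 :: L', ?_, ?_⟩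
        · exact ((hL'perm.cons p.2).cons p.1).trans hflatperm.symm
        · intro v hv
          have hmm : ∀ T ∈ S ++ (sl ++ p :: tl).flatMap fun q => [q.1, q.2],
              T ∈ (S ++ [p.1, p.2]) ++ (sl ++ tl).flatMap fun q => [q.1, q.2] := by
            intro T hT
            rw [List.append_assoc]
            rcases List.mem_append.1 hT with hT | hT
            · exact List.mem_append_left _ hT
            · refine List.mem_append_right _ ?_
              have := hflatperm.mem_iff.1 hT
              simpa using this
          have hv' : Relation.ReflTransGen
              (stepRel ((S ++ [p.1, p.2]) ++ (sl ++ tl).flatMap fun q => [q.1, q.2])) u v :=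
            Relation.ReflTransGen.mono (fun a b hab => stepRel_mono hmm hab) u v hv
          have hres := hL' v hv'
          have heq : (S ++ [p.1, p.2]) ++ L' = S ++ p.1 :: p.2 :: L' := by
            rw [List.append_assoc]
            rfl
          rwa [heq] at hres
      · push_neg at h
        have hwflat : ∀ T ∈ ps.flatMap fun q => [q.1, q.2], PosW T := by
          intro T hT
          obtain ⟨p, hp, hTp⟩ := List.mem_flatMap.1 hT
          simp only [List.mem_cons, List.mem_singleton, List.not_mem_nil, or_false] at hTp
          obtain ⟨_, _, hw1, hw2, _⟩ := hps p hp
          rcases hTp with rfl | rfl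
          · exact hw1
          · exact hw2
        refine ⟨ps.flatMap fun q => [q.1, q.2], List.Perm.refl _, ?_⟩
        intro v hv
        exact RB_mono_append hwflat
          (no_touch ps S u hS hInv h (fun p hp => (hps p hp).2.2.2.2) v hv)

end SymAux

/-- Fact 2. In a symmetric trip network there is, for every node
`u`, a schedule `S` such that every node reachable from `u` by a walk in `D` is
`S`-reachable from `u`. -/
theorem symmetric_one_to_all
    {V : Type} (trips : List (List (DEdge V)))
    (hN : IsTripNetwork trips) (hsym : IsSymmetricTrips trips) (u : V) :
    ∃ S : List (List (DEdge V)), S.Perm trips ∧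
      ∀ v : V, DReachable trips u v → TReachable (scheduleTG S) u v := by
  obtain ⟨ps, hperm, hrev⟩ := hsym
  have hgood : ∀ p ∈ ps, SymAux.Good p := by
    intro p hp
    have h1 : p.1 ∈ trips := hperm.mem_iff.2 (List.mem_flatMap.2 ⟨p, hp, by simp⟩)
    have h2 : p.2 ∈ trips := hperm.mem_iff.2 (List.mem_flatMap.2 ⟨p, hp, by simp⟩)
    obtain ⟨⟨_, hc1⟩, hw1⟩ := hN.1 p.1 h1
    obtain ⟨⟨_, hc2⟩, hw2⟩ := hN.1 p.2 h2
    exact ⟨hc1, hc2, hw1, hw2, hrev p hp⟩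
  obtain ⟨L, hLperm, hL⟩ := SymAux.main_ind u ps.length ps le_rfl hgood []
    (by simp) (by simp)
  refine ⟨L, hLperm.trans hperm.symm, ?_⟩
  intro v hv
  have hv' : Relation.ReflTransGen
      (SymAux.stepRel ([] ++ ps.flatMap fun p => [p.1, p.2])) u v := by
    refine Relation.ReflTransGen.mono ?_ u v hv
    intro a b hab
    obtain ⟨T, hT, e, he, hab'⟩ := hab
    exact ⟨T, by simpa using hperm.mem_iff.1 hT, e, he, hab'⟩
  have hres := hL v hv'
  rw [List.nil_append] at hres
  exact SymAux.TRB_to_TReachable hres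
end

section
/- Let (D,𝕋) be a symmetric trip network. For any node u, there exists a schedule S of (D,𝕋) such that, for any node v from which u is reachable by a walk in D, u is S-reachable from v. -/
/-! ### Auxiliary development -/

section Aux

variable {V : Type}

lemma tripNodes_singleton (e : DEdge V) : tripNodes [e] = [e.tail, e.head] := by
  simp [tripNodes]

lemma tripNodes_cons' (e : DEdge V) (es : List (DEdge V)) (h : es ≠ []) :
    tripNodes (e :: es) = e.tail :: tripNodes es := by
  obtain ⟨f, fs, rfl⟩ := List.exists_cons_of_ne_nil h
  simp [tripNodes]

lemma exists_tripNodes_head (f : DEdge V) (es : List (DEdge V)) :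
    ∃ rest, tripNodes (f :: es) = f.tail :: rest := by
  cases es <;> simp [tripNodes]

lemma getLast?_cons_ne {α : Type*} (x : α) {l : List α} (h : l ≠ []) :
    (x :: l).getLast? = l.getLast? := by
  obtain ⟨y, ys, rfl⟩ := List.exists_cons_of_ne_nil h; simp

lemma mem_tripNodes_of_mem :
    ∀ (T : List (DEdge V)), (T.Chain' fun e f => e.head = f.tail) →
      ∀ e ∈ T, e.tail ∈ tripNodes T ∧ e.head ∈ tripNodes T := by
  intro T
  induction T with
  | nil => intro _ e he; simp at he
  | cons f es ih =>
    intro hch e he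
    rcases List.mem_cons.1 he with rfl | he'
    · constructor
      · cases es <;> simp [tripNodes]
      · cases es with
        | nil => simp [tripNodes_singleton]
        | cons g gs =>
          have h1 : e.head = g.tail := (List.isChain_cons_cons.1 hch).1
          rw [tripNodes_cons' _ _ (by simp)]
          obtain ⟨rest, hr⟩ := exists_tripNodes_head g gs
          rw [hr, h1]; simp
    · have hne : es ≠ [] := by rintro rfl; simp at he'
      have h2 := ih hch.tail e he'
      rw [tripNodes_cons' f es hne]
      exact ⟨List.mem_cons_of_mem _ h2.1, List.mem_cons_of_mem _ h2.2⟩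

lemma sublist_pair_of_mem {a b : V} :
    ∀ {l : List V}, a ∈ l → b ∈ l →
      a = b ∨ List.Sublist [a, b] l ∨ List.Sublist [b, a] l := by
  intro l
  induction l with
  | nil => simp
  | cons x xs ih =>
    intro ha hb
    rcases List.mem_cons.1 ha with rfl | ha'
    · rcases List.mem_cons.1 hb with rfl | hb'
      · exact Or.inl rfl
      · exact Or.inr (Or.inl (List.Sublist.cons₂ _ (List.singleton_sublist.2 hb')))
    · rcases List.mem_cons.1 hb with rfl | hb'
      · exact Or.inr (Or.inr (List.Sublist.cons₂ _ (List.singleton_sublist.2 ha')))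
      · rcases ih ha' hb' with h | h | h
        exacts [Or.inl h, Or.inr (Or.inl (h.cons _)), Or.inr (Or.inr (h.cons _))]

/-- Total duration of a block of trips. -/
def blockDur (S : List (List (DEdge V))) : ℝ := (S.map tripDuration).sum

lemma blockDur_append (A B : List (List (DEdge V))) :
    blockDur (A ++ B) = blockDur A + blockDur B := by
  simp [blockDur]

lemma blockDur_singleton (T : List (DEdge V)) : blockDur [T] = tripDuration T := by
  simp [blockDur]

lemma blockDur_nonneg {L : List (List (DEdge V))}
    (h : ∀ T ∈ L, ∀ e ∈ T, 0 < e.weight) : 0 ≤ blockDur L := by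
  refine List.sum_nonneg ?_
  intro x hx
  obtain ⟨T, hT, rfl⟩ := List.mem_map.1 hx
  exact tripDuration_nonneg (h T hT)

/-- The temporal graph of a block of trips scheduled sequentially from time `t`. -/
def blockTG (S : List (List (DEdge V))) (t : ℝ) : Set (TEdge V) :=
  inducedTG S (fun i => t + scheduleTimes S i)

lemma scheduleTimes_append_left {A B : List (List (DEdge V))} {i : ℕ} (h : i ≤ A.length) :
    scheduleTimes (A ++ B) i = scheduleTimes A i := by
  simp [scheduleTimes, List.take_append_of_le_length h]

lemma scheduleTimes_append_right (A B : List (List (DEdge V))) (i : ℕ) :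
    scheduleTimes (A ++ B) (A.length + i) = blockDur A + scheduleTimes B i := by
  simp [scheduleTimes, blockDur, List.take_append, List.take_of_length_le]

lemma blockTG_mono_left {A B : List (List (DEdge V))} {t : ℝ} {f : TEdge V}
    (hf : f ∈ blockTG A t) : f ∈ blockTG (A ++ B) t := by
  obtain ⟨i, hi⟩ := hf
  have h1 : i.1 < (A ++ B).length := by simp; omega
  refine ⟨⟨i.1, h1⟩, ?_⟩
  have hg : (A ++ B).get ⟨i.1, h1⟩ = A.get i := List.getElem_append_left i.2
  show f ∈ tripTEdges ((A ++ B).get ⟨i.1, h1⟩) (t + scheduleTimes (A ++ B) i.1)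
  rw [hg, scheduleTimes_append_left i.2.le]
  exact hi

lemma blockTG_mono_right {A B : List (List (DEdge V))} {t : ℝ} {f : TEdge V}
    (hf : f ∈ blockTG B (t + blockDur A)) : f ∈ blockTG (A ++ B) t := by
  obtain ⟨i, hi⟩ := hf
  have hilt := i.2
  have h1 : A.length + i.1 < (A ++ B).length := by simp only [List.length_append]; omega
  refine ⟨⟨A.length + i.1, h1⟩, ?_⟩
  have hg : (A ++ B).get ⟨A.length + i.1, h1⟩ = B.get i := by
    simp only [List.get_eq_getElem]
    rw [List.getElem_append_right (by omega)]
    simp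
  show f ∈ tripTEdges ((A ++ B).get ⟨A.length + i.1, h1⟩) (t + scheduleTimes (A ++ B) (A.length + i.1))
  rw [hg, scheduleTimes_append_right, ← add_assoc]
  exact hi

/-- `Good S v w`: at whatever time the block `S` is scheduled, there is a temporal
path within `S` from `v` to `w` starting no earlier than the start of the block
and arriving no later than its end (or `v = w`). -/
def Good (S : List (List (DEdge V))) (v w : V) : Prop :=
  v = w ∨ ∀ t : ℝ, ∃ p : List (TEdge V), p ≠ [] ∧ (∀ f ∈ p, f ∈ blockTG S t) ∧
    (p.Chain' fun e f => e.head = f.tail ∧ e.time + e.travel ≤ f.time) ∧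
    p.head?.map TEdge.tail = some v ∧ p.getLast?.map TEdge.head = some w ∧
    ∀ f ∈ p, t ≤ f.time ∧ f.time + f.travel ≤ t + blockDur S

lemma good_refl {S : List (List (DEdge V))} {v : V} : Good S v v := Or.inl (Eq.refl v)

lemma Good.comp {A B : List (List (DEdge V))} {v w x : V}
    (hA : 0 ≤ blockDur A) (hB : 0 ≤ blockDur B)
    (h1 : Good A v w) (h2 : Good B w x) : Good (A ++ B) v x := by
  rcases h1 with rfl | h1
  · rcases h2 with rfl | h2
    · exact Or.inl rfl
    · right; intro t
      obtain ⟨p, hne, hmem, hch, hhd, hlast, hbd⟩ := h2 (t + blockDur A)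
      refine ⟨p, hne, fun f hf => blockTG_mono_right (hmem f hf), hch, hhd, hlast, ?_⟩
      intro f hf
      have := hbd f hf
      rw [blockDur_append]
      constructor <;> linarith [this.1, this.2]
  · rcases h2 with rfl | h2
    · right; intro t
      obtain ⟨p, hne, hmem, hch, hhd, hlast, hbd⟩ := h1 t
      refine ⟨p, hne, fun f hf => blockTG_mono_left (hmem f hf), hch, hhd, hlast, ?_⟩
      intro f hf
      have := hbd f hf
      rw [blockDur_append]
      constructor <;> linarith [this.1, this.2]
    · right; intro t
      obtain ⟨p, pne, pmem, pch, phd, plast, pbd⟩ := h1 t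
      obtain ⟨q, qne, qmem, qch, qhd, qlast, qbd⟩ := h2 (t + blockDur A)
      refine ⟨p ++ q, by simp [pne], ?_, ?_, ?_, ?_, ?_⟩
      · intro f hf
        rcases List.mem_append.1 hf with hf | hf
        exacts [blockTG_mono_left (pmem f hf), blockTG_mono_right (qmem f hf)]
      · refine List.IsChain.append pch qch ?_
        intro e he g hg
        rw [Option.mem_def] at he hg
        have hhead : e.head = w := by rw [he] at plast; simpa using plast
        have htail : g.tail = w := by rw [hg] at qhd; simpa using qhd
        have hep : e ∈ p := List.mem_of_mem_getLast? (by rw [Option.mem_def]; exact he)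
        have hgq : g ∈ q := List.mem_of_mem_head? (by rw [Option.mem_def]; exact hg)
        refine ⟨by rw [hhead, htail], ?_⟩
        have h3 := (pbd e hep).2
        have h4 := (qbd g hgq).1
        linarith
      · rw [List.head?_append_of_ne_nil _ pne]; exact phd
      · rw [List.getLast?_append_of_ne_nil _ qne]; exact qlast
      · intro f hf
        rw [blockDur_append]
        rcases List.mem_append.1 hf with hf | hf
        · have := pbd f hf
          constructor <;> linarith [this.1, this.2]
        · have := qbd f hf
          constructor <;> linarith [this.1, this.2]

lemma tripPath :
    ∀ (T : List (DEdge V)), (T.Chain' fun e f => e.head = f.tail) →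
      (∀ e ∈ T, 0 < e.weight) → ∀ a b : V, List.Sublist [a, b] (tripNodes T) → ∀ t : ℝ,
      ∃ p : List (TEdge V), p ≠ [] ∧ (∀ f ∈ p, f ∈ tripTEdges T t) ∧
        (p.Chain' fun e f => e.head = f.tail ∧ e.time + e.travel ≤ f.time) ∧
        p.head?.map TEdge.tail = some a ∧ p.getLast?.map TEdge.head = some b ∧
        ∀ f ∈ p, t ≤ f.time ∧ f.time + f.travel ≤ t + tripDuration T := by
  intro T
  induction T with
  | nil =>
    intro _ _ a b hsub t
    rw [show tripNodes ([] : List (DEdge V)) = [] from by simp [tripNodes]] at hsub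
    simp at hsub
  | cons e es ih =>
    intro hch hw a b hsub t
    have hew : 0 < e.weight := hw e (List.mem_cons_self)
    cases es with
    | nil =>
      rw [tripNodes_singleton] at hsub
      have hab : a = e.tail ∧ b = e.head := by
        cases hsub with
        | cons _ h =>
          cases h with
          | cons _ h => simp at h
          | cons_cons _ h => simp at h
        | cons_cons _ h =>
          cases h with
          | cons _ h => simp at h
          | cons_cons _ h => exact ⟨rfl, rfl⟩
      obtain ⟨rfl, rfl⟩ := hab
      refine ⟨[⟨e.tail, e.head, t, e.weight⟩], by simp, ?_, by simp [List.Chain'], by simp, by simp, ?_⟩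
      · intro f hf; simp at hf; subst hf
        simp [tripTEdges]
      · intro f hf; simp at hf; subst hf
        simp [tripDuration]
    | cons g gs =>
      have hne : (g :: gs : List (DEdge V)) ≠ [] := by simp
      rw [tripNodes_cons' e _ hne] at hsub
      have hch' : (g :: gs).Chain' fun e f => e.head = f.tail := hch.tail
      have hw' : ∀ e' ∈ g :: gs, 0 < e'.weight := fun e' h => hw e' (List.mem_cons_of_mem _ h)
      have hTE : tripTEdges (e :: g :: gs) t
          = ⟨e.tail, e.head, t, e.weight⟩ :: tripTEdges (g :: gs) (t + e.weight) := rfl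
      have hd : tripDuration (e :: g :: gs) = e.weight + tripDuration (g :: gs) := by
        simp [tripDuration]
      cases hsub with
      | cons _ h =>
        obtain ⟨p, pne, pmem, pch, phd, plast, pbd⟩ := ih hch' hw' a b h (t + e.weight)
        refine ⟨p, pne, ?_, pch, phd, plast, ?_⟩
        · intro f hf
          rw [hTE]
          exact List.mem_cons_of_mem _ (pmem f hf)
        · intro f hf
          have := pbd f hf
          rw [hd]
          constructor <;> linarith [this.1, this.2]
      | cons_cons _ h =>
        have hhead : e.head = g.tail := (List.isChain_cons_cons.1 hch).1
        obtain ⟨rest, hrest⟩ := exists_tripNodes_head g gs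
        have hb : b ∈ tripNodes (g :: gs) := List.singleton_sublist.1 h
        rw [hrest] at hb
        have hdn : 0 ≤ tripDuration (g :: gs) := tripDuration_nonneg hw'
        rcases List.mem_cons.1 hb with rfl | hbrest
        · refine ⟨[⟨e.tail, e.head, t, e.weight⟩], by simp, ?_, by simp [List.Chain'], by simp,
            by simp [hhead], ?_⟩
          · intro f hf; simp at hf; subst hf
            rw [hTE]; exact List.mem_cons_self
          · intro f hf; simp at hf; subst hf
            rw [hd]; simp
            linarith
        · have hsub2 : List.Sublist [g.tail, b] (tripNodes (g :: gs)) := by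
            rw [hrest]
            exact List.Sublist.cons₂ _ (List.singleton_sublist.2 hbrest)
          obtain ⟨p, pne, pmem, pch, phd, plast, pbd⟩ :=
            ih hch' hw' g.tail b hsub2 (t + e.weight)
          refine ⟨⟨e.tail, e.head, t, e.weight⟩ :: p, by simp, ?_, ?_, by simp, ?_, ?_⟩
          · intro f hf
            rw [hTE]
            rcases List.mem_cons.1 hf with rfl | hf
            · exact List.mem_cons_self
            · exact List.mem_cons_of_mem _ (pmem f hf)
          · refine List.isChain_cons.2 ⟨?_, pch⟩
            intro y hy
            rw [Option.mem_def] at hy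
            have hyt : y.tail = g.tail := by rw [hy] at phd; simpa using phd
            have hyp : y ∈ p := List.mem_of_mem_head? (by rw [Option.mem_def]; exact hy)
            refine ⟨by simp [hhead, hyt], ?_⟩
            simpa using (pbd y hyp).1
          · rw [getLast?_cons_ne _ pne]; exact plast
          · intro f hf
            rw [hd]
            rcases List.mem_cons.1 hf with rfl | hf
            · simp; linarith
            · have := pbd f hf
              constructor <;> linarith [this.1, this.2]

lemma good_singleton {T : List (DEdge V)} (hch : T.Chain' fun e f => e.head = f.tail)
    (hw : ∀ e ∈ T, 0 < e.weight) {a b : V}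
    (hsub : List.Sublist [a, b] (tripNodes T)) : Good [T] a b := by
  right; intro t
  obtain ⟨p, pne, pmem, pch, phd, plast, pbd⟩ := tripPath T hch hw a b hsub t
  refine ⟨p, pne, ?_, pch, phd, plast, ?_⟩
  · intro f hf
    refine ⟨⟨0, by simp⟩, ?_⟩
    simpa [scheduleTimes] using pmem f hf
  · simpa [blockDur_singleton] using pbd

lemma good_pair {p : List (DEdge V) × List (DEdge V)}
    (h1 : IsWalk p.1) (hw1 : ∀ e ∈ p.1, 0 < e.weight)
    (h2 : IsWalk p.2) (hw2 : ∀ e ∈ p.2, 0 < e.weight)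
    (hrev : tripNodes p.2 = (tripNodes p.1).reverse)
    {c c₀ : V} (hc : c ∈ tripNodes p.1) (hc₀ : c₀ ∈ tripNodes p.1) :
    Good [p.2, p.1] c c₀ := by
  have hA : 0 ≤ blockDur [p.2] := by rw [blockDur_singleton]; exact tripDuration_nonneg hw2
  have hB : 0 ≤ blockDur [p.1] := by rw [blockDur_singleton]; exact tripDuration_nonneg hw1
  have hsplit : ([p.2, p.1] : List (List (DEdge V))) = [p.2] ++ [p.1] := rfl
  rw [hsplit]
  rcases sublist_pair_of_mem hc hc₀ with rfl | h | h
  · exact good_refl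
  · exact Good.comp hA hB good_refl (good_singleton h1.2 hw1 h)
  · have h' : List.Sublist [c, c₀] (tripNodes p.2) := by
      rw [hrev]; simpa using h.reverse
    exact Good.comp hA hB (good_singleton h2.2 hw2 h') good_refl

lemma buildSchedule :
    ∀ (n : ℕ) (ps : List (List (DEdge V) × List (DEdge V))) (C : Set V),
      ps.length = n →
      (∀ p ∈ ps, (IsWalk p.1 ∧ ∀ e ∈ p.1, 0 < e.weight) ∧
        (IsWalk p.2 ∧ ∀ e ∈ p.2, 0 < e.weight) ∧
        tripNodes p.2 = (tripNodes p.1).reverse) →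
      ∃ (L : List (List (DEdge V))) (C' : Set V),
        L.Perm (ps.flatMap fun p => [p.1, p.2]) ∧ C ⊆ C' ∧
        (∀ v ∈ C', ∃ c ∈ C, Good L v c) ∧
        (∀ p ∈ ps, ∀ w ∈ tripNodes p.1, w ∈ C' → ∀ w' ∈ tripNodes p.1, w' ∈ C') := by
  intro n
  induction n with
  | zero =>
    intro ps C hlen _
    rw [List.length_eq_zero_iff] at hlen
    subst hlen
    exact ⟨[], C, by simp, subset_rfl, fun v hv => ⟨v, hv, good_refl⟩, by simp⟩
  | succ n ih =>
    intro ps C hlen hval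
    by_cases hex : ∃ p ∈ ps, ∃ c₀ ∈ tripNodes p.1, c₀ ∈ C
    · obtain ⟨p, hp, c₀, hc₀, hc₀C⟩ := hex
      obtain ⟨l₁, l₂, rfl⟩ := List.append_of_mem hp
      have hlen' : (l₁ ++ l₂).length = n := by simp at hlen ⊢; omega
      have hmemof : ∀ q ∈ l₁ ++ l₂, q ∈ l₁ ++ p :: l₂ := by
        intro q hq
        rcases List.mem_append.1 hq with h | h
        · exact List.mem_append_left _ h
        · exact List.mem_append_right _ (List.mem_cons_of_mem _ h)
      obtain ⟨L', C'', hperm, hsub, hgood, hclos⟩ :=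
        ih (l₁ ++ l₂) (C ∪ {w | w ∈ tripNodes p.1}) hlen' (fun q hq => hval q (hmemof q hq))
      obtain ⟨⟨hw1, hpw1⟩, ⟨hw2, hpw2⟩, hrev⟩ := hval p hp
      have hposL' : ∀ T ∈ L', ∀ e ∈ T, 0 < e.weight := by
        intro T hT
        have : T ∈ (l₁ ++ l₂).flatMap fun p => [p.1, p.2] := hperm.mem_iff.1 hT
        obtain ⟨q, hq, hTq⟩ := List.mem_flatMap.1 this
        have hvq := hval q (hmemof q hq)
        rcases (by simpa using hTq : T = q.1 ∨ T = q.2) with rfl | rfl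
        · exact hvq.1.2
        · exact hvq.2.1.2
      have hL'nn : 0 ≤ blockDur L' := blockDur_nonneg hposL'
      have hpairnn : 0 ≤ blockDur [p.2, p.1] := by
        refine blockDur_nonneg ?_
        intro T hT
        rcases List.mem_cons.1 hT with rfl | hT
        · exact hpw2
        · simp at hT; subst hT; exact hpw1
      refine ⟨L' ++ [p.2, p.1], C'', ?_, ?_, ?_, ?_⟩
      · have e1 : (l₁ ++ p :: l₂).flatMap (fun q => [q.1, q.2])
            |>.Perm ([p.1, p.2] ++ (l₁ ++ l₂).flatMap fun q => [q.1, q.2]) := by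
          have := (List.perm_middle (a := p) (l₁ := l₁) (l₂ := l₂)).flatMap_right
            (fun q => [q.1, q.2])
          simpa using this
        have e2 : (L' ++ [p.2, p.1]).Perm
            (((l₁ ++ l₂).flatMap fun q => [q.1, q.2]) ++ [p.2, p.1]) :=
          hperm.append_right _
        have e3 : (((l₁ ++ l₂).flatMap fun q => [q.1, q.2]) ++ [p.2, p.1]).Perm
            ([p.1, p.2] ++ (l₁ ++ l₂).flatMap fun q => [q.1, q.2]) := by
          refine List.perm_append_comm.trans ?_
          exact List.Perm.append_right _ (List.Perm.swap _ _ _)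
        exact (e2.trans e3).trans e1.symm
      · exact fun v hv => hsub (Or.inl hv)
      · intro v hv
        obtain ⟨c, hcC, hgd⟩ := hgood v hv
        rcases hcC with hcC | hcN
        · exact ⟨c, hcC, Good.comp hL'nn hpairnn hgd good_refl⟩
        · exact ⟨c₀, hc₀C, Good.comp hL'nn hpairnn hgd
            (good_pair hw1 hpw1 hw2 hpw2 hrev hcN hc₀)⟩
      · intro q hq w hw hwC' w' hw'
        rcases List.mem_append.1 hq with h | h
        · exact hclos q (List.mem_append_left _ h) w hw hwC' w' hw'
        · rcases List.mem_cons.1 h with rfl | h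
          · exact hsub (Or.inr hw')
          · exact hclos q (List.mem_append_right _ h) w hw hwC' w' hw'
    · refine ⟨ps.flatMap fun p => [p.1, p.2], C, List.Perm.refl _, subset_rfl,
        fun v hv => ⟨v, hv, good_refl⟩, ?_⟩
      intro q hq w hw hwC
      exact absurd ⟨q, hq, w, hw, hwC⟩ hex

end Aux

/-- Fact 3. In a symmetric trip network there is, for every node
`u`, a schedule `S` such that `u` is `S`-reachable from every node `v` from which
`u` is reachable by a walk in `D`. -/
theorem symmetric_all_to_one
    {V : Type} (trips : List (List (DEdge V)))
    (hN : IsTripNetwork trips) (hsym : IsSymmetricTrips trips) (u : V) :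
    ∃ S : List (List (DEdge V)), S.Perm trips ∧
      ∀ v : V, DReachable trips v u → TReachable (scheduleTG S) v u := by
  obtain ⟨ps, hperm, hrev⟩ := hsym
  have hval : ∀ p ∈ ps, (IsWalk p.1 ∧ ∀ e ∈ p.1, 0 < e.weight) ∧
      (IsWalk p.2 ∧ ∀ e ∈ p.2, 0 < e.weight) ∧
      tripNodes p.2 = (tripNodes p.1).reverse := by
    intro p hp
    have h1 : p.1 ∈ trips := hperm.mem_iff.2 (List.mem_flatMap.2 ⟨p, hp, by simp⟩)
    have h2 : p.2 ∈ trips := hperm.mem_iff.2 (List.mem_flatMap.2 ⟨p, hp, by simp⟩)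
    exact ⟨hN.1 p.1 h1, hN.1 p.2 h2, hrev p hp⟩
  obtain ⟨L, C', hLperm, hsubC, hgood, hclos⟩ :=
    buildSchedule ps.length ps ({u} : Set V) rfl hval
  refine ⟨L, hLperm.trans hperm.symm, ?_⟩
  intro v hv
  have hvC : v ∈ C' := by
    induction hv using Relation.ReflTransGen.head_induction_on with
    | refl => exact hsubC rfl
    | head hstep _ ihc =>
      obtain ⟨T, hT, e, heT, rfl, rfl⟩ := hstep
      have hTf : T ∈ ps.flatMap fun p => [p.1, p.2] := hperm.mem_iff.1 hT
      obtain ⟨p, hp, hT12⟩ := List.mem_flatMap.1 hTf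
      have hwalk : IsWalk T := (hN.1 T hT).1
      have hmemT := mem_tripNodes_of_mem T hwalk.2 e heT
      rcases (by simpa using hT12 : T = p.1 ∨ T = p.2) with rfl | rfl
      · exact hclos p hp e.head hmemT.2 ihc e.tail hmemT.1
      · have hr := (hval p hp).2.2
        have m1 : e.tail ∈ tripNodes p.1 := by
          rw [← List.mem_reverse, ← hr]; exact hmemT.1
        have m2 : e.head ∈ tripNodes p.1 := by
          rw [← List.mem_reverse, ← hr]; exact hmemT.2
        exact hclos p hp e.head m2 ihc e.tail m1
  obtain ⟨c, hc, hgd⟩ := hgood v hvC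
  rcases hc with rfl
  rcases hgd with rfl | hgd
  · exact Or.inl rfl
  · obtain ⟨p, pne, pmem, pch, phd, plast, _⟩ := hgd 0
    refine Or.inr ⟨p, pne, ?_, pch, phd, plast⟩
    intro f hf
    obtain ⟨i, hi⟩ := pmem f hf
    exact ⟨i, by simpa using hi⟩
end

section
/- Let (D,𝕋) be a symmetric trip network. Then (D,𝕋) is strongly temporalisable if and only if D is strongly connected (i.e., every node of D is reachable from every other node by a walk in D). -/
namespace TempAux

variable {V : Type}

theorem tripTEdges_length (T : List (DEdge V)) (t : ℝ) : (tripTEdges T t).length = T.length := by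
  induction T generalizing t with
  | nil => rfl
  | cons e es ih => simp [tripTEdges, ih]

theorem tripDuration_cons (e : DEdge V) (es : List (DEdge V)) :
    tripDuration (e :: es) = e.weight + tripDuration es := by
  simp [tripDuration]

theorem tripTEdges_getElem? (T : List (DEdge V)) (t : ℝ) (i : ℕ) :
    (tripTEdges T t)[i]? =
      (T[i]?).map fun e => ⟨e.tail, e.head, t + tripDuration (T.take i), e.weight⟩ := by
  induction T generalizing t i with
  | nil => simp [tripTEdges]
  | cons e es ih =>
    cases i with
    | zero => simp [tripTEdges, tripDuration]
    | succ i =>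
      simp only [tripTEdges, List.getElem?_cons_succ, ih, List.take_succ_cons,
        tripDuration_cons]
      cases h : es[i]? <;> simp [h]
      ring

theorem tripNodes_length (T : List (DEdge V)) (h : T ≠ []) :
    (tripNodes T).length = T.length + 1 := by
  simp [tripNodes, List.getLast?_eq_getLast_of_ne_nil h]

theorem tripNodes_getElem?_tail (T : List (DEdge V)) (i : ℕ) (h : i < T.length) :
    (tripNodes T)[i]? = some (T[i].tail) := by
  simp [tripNodes]
  rw [List.getElem?_append_left (by simpa using h)]
  simp [h]

theorem tripNodes_cons (f : DEdge V) (T : List (DEdge V)) (h : T ≠ []) :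
    tripNodes (f :: T) = f.tail :: tripNodes T := by
  cases T with
  | nil => exact absurd rfl h
  | cons g T' => simp [tripNodes, List.getLast?_cons_cons]

theorem tripNodes_single (e : DEdge V) : tripNodes [e] = [e.tail, e.head] := by
  simp [tripNodes]

theorem tripNodes_getElem?_head (T : List (DEdge V))
    (hch : T.Chain' fun e f => e.head = f.tail) :
    ∀ (i : ℕ) (h : i < T.length), (tripNodes T)[i + 1]? = some (T[i].head) := by
  induction T with
  | nil => intro i h; simp at h
  | cons e es ih =>
    intro i h
    cases es with
    | nil =>
      have : i = 0 := by simpa using h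
      subst this
      simp [tripNodes_single]
    | cons f es' =>
      rw [tripNodes_cons _ _ (by simp)]
      cases i with
      | zero =>
        have : e.head = f.tail := (List.isChain_cons_cons.mp hch).1
        simp [this, tripNodes_getElem?_tail (f :: es') 0 (by simp)]
      | succ i =>
        have h' : i < (f :: es').length := by simpa using h
        simpa using ih (List.isChain_cons_cons.mp hch).2 i h'

theorem mem_tripNodes_tail {T : List (DEdge V)} {e : DEdge V} (he : e ∈ T) :
    e.tail ∈ tripNodes T :=
  List.mem_append_left _ (List.mem_map_of_mem he)

theorem mem_tripNodes_head {T : List (DEdge V)} {e : DEdge V}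
    (hch : T.Chain' fun e f => e.head = f.tail) (he : e ∈ T) :
    e.head ∈ tripNodes T := by
  obtain ⟨i, hi, rfl⟩ := List.getElem_of_mem he
  have := tripNodes_getElem?_head T hch i hi
  exact List.mem_iff_getElem?.mpr ⟨i + 1, this⟩

theorem tripTEdges_endpoints {T : List (DEdge V)} {t : ℝ} {f : TEdge V}
    (hf : f ∈ tripTEdges T t) : ∃ e ∈ T, e.tail = f.tail ∧ e.head = f.head := by
  induction T generalizing t with
  | nil => simp [tripTEdges] at hf
  | cons e es ih =>
    simp only [tripTEdges, List.mem_cons] at hf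
    rcases hf with rfl | hf
    · exact ⟨e, by simp⟩
    · obtain ⟨e', he', h1, h2⟩ := ih hf
      exact ⟨e', by simp [he'], h1, h2⟩

theorem tripDuration_take_nonneg {T : List (DEdge V)} (hw : ∀ e ∈ T, 0 < e.weight) (i : ℕ) :
    0 ≤ tripDuration (T.take i) := by
  apply List.sum_nonneg
  intro x hx
  obtain ⟨e, he, rfl⟩ := List.mem_map.mp hx
  exact le_of_lt (hw e (List.mem_of_mem_take he))

theorem tripDuration_take_succ {T : List (DEdge V)} (i : ℕ) (h : i < T.length) :
    tripDuration (T.take (i + 1)) = tripDuration (T.take i) + T[i].weight := by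
  unfold tripDuration
  rw [List.map_take, List.map_take, List.sum_take_succ _ i (by simpa using h), List.getElem_map]

theorem tripDuration_take_le {T : List (DEdge V)} (hw : ∀ e ∈ T, 0 < e.weight) (i : ℕ) :
    tripDuration (T.take i) ≤ tripDuration T := by
  unfold tripDuration
  rw [List.map_take]
  calc ((T.map DEdge.weight).take i).sum
      ≤ ((T.map DEdge.weight).take i).sum + ((T.map DEdge.weight).drop i).sum := by
        apply le_add_of_nonneg_right
        apply List.sum_nonneg
        intro x hx
        have hx' : x ∈ T.map DEdge.weight := List.mem_of_mem_drop hx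
        obtain ⟨e, he, rfl⟩ := List.mem_map.mp hx'
        exact le_of_lt (hw e he)
    _ = (T.map DEdge.weight).sum := by
        rw [← List.sum_append, List.take_append_drop]

theorem tripTEdges_time_bounds {T : List (DEdge V)} {t : ℝ} {f : TEdge V}
    (hw : ∀ e ∈ T, 0 < e.weight) (hf : f ∈ tripTEdges T t) :
    t ≤ f.time ∧ f.time + f.travel ≤ t + tripDuration T := by
  obtain ⟨i, hi, hget⟩ := List.getElem_of_mem hf
  rw [tripTEdges_length] at hi
  have := tripTEdges_getElem? T t i
  rw [List.getElem?_eq_getElem (by rwa [tripTEdges_length]), hget,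
    List.getElem?_eq_getElem hi] at this
  simp only [Option.map_some, Option.some.injEq] at this
  subst this
  constructor
  · simpa using tripDuration_take_nonneg hw i
  · simp only
    rw [add_assoc, ← tripDuration_take_succ i hi]
    exact add_le_add_right (tripDuration_take_le hw _) t

/-- Temporal reachability with time-window bounds. -/
def ReachB (G : Set (TEdge V)) (u v : V) (t0 t1 : ℝ) : Prop :=
  u = v ∨ ∃ p, IsTemporalPath G p u v ∧ ∀ f ∈ p, t0 ≤ f.time ∧ f.time + f.travel ≤ t1

theorem ReachB.mono {G : Set (TEdge V)} {u v : V} {t0 t1 t0' t1' : ℝ}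
    (h0 : t0' ≤ t0) (h1 : t1 ≤ t1') (h : ReachB G u v t0 t1) : ReachB G u v t0' t1' := by
  rcases h with h | ⟨p, hp, hb⟩
  · exact Or.inl h
  · exact Or.inr ⟨p, hp, fun f hf => ⟨le_trans h0 (hb f hf).1, le_trans (hb f hf).2 h1⟩⟩

theorem ReachB.trans {G : Set (TEdge V)} {u v w : V} {t0 t1 t2 : ℝ}
    (h01 : t0 ≤ t1) (h12 : t1 ≤ t2)
    (h : ReachB G u v t0 t1) (h' : ReachB G v w t1 t2) : ReachB G u w t0 t2 := by
  rcases h with rfl | ⟨p, ⟨hpne, hpG, hpch, hph, hpl⟩, hpb⟩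
  · exact h'.mono h01 le_rfl
  rcases h' with rfl | ⟨q, ⟨hqne, hqG, hqch, hqh, hql⟩, hqb⟩
  · exact Or.inr ⟨p, ⟨hpne, hpG, hpch, hph, hpl⟩, fun f hf =>
      ⟨(hpb f hf).1, le_trans (hpb f hf).2 h12⟩⟩
  refine Or.inr ⟨p ++ q, ⟨by simp [hpne], ?_, ?_, ?_, ?_⟩, ?_⟩
  · intro f hf
    rcases List.mem_append.mp hf with hf | hf
    · exact hpG f hf
    · exact hqG f hf
  · rw [List.Chain', List.isChain_append]
    refine ⟨hpch, hqch, ?_⟩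
    intro x hx y hy
    have hxv : x.head = v := by
      rw [hx] at hpl; simpa using hpl
    have hyv : y.tail = v := by
      rw [hy] at hqh; simpa using hqh
    refine ⟨hxv.trans hyv.symm, ?_⟩
    have hx' : x ∈ p := List.mem_of_mem_getLast? (by rw [hx]; rfl)
    have hy' : y ∈ q := List.mem_of_mem_head? (by rw [hy]; rfl)
    exact le_trans (hpb x hx').2 (hqb y hy').1
  · cases p with
    | nil => exact absurd rfl hpne
    | cons a p' => simpa using hph
  · rw [List.getLast?_append]
    cases hq : q.getLast? with
    | none => rw [hq] at hql; simp at hql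
    | some a => rw [hq] at hql; simpa using hql
  · intro f hf
    rcases List.mem_append.mp hf with hf | hf
    · exact ⟨(hpb f hf).1, le_trans (hpb f hf).2 h12⟩
    · exact ⟨le_trans h01 (hqb f hf).1, (hqb f hf).2⟩

theorem segment {G : Set (TEdge V)} {T : List (DEdge V)} {t : ℝ}
    (hG : ∀ f ∈ tripTEdges T t, f ∈ G)
    (hch : T.Chain' fun e f => e.head = f.tail) (hw : ∀ e ∈ T, 0 < e.weight)
    {a b : ℕ} {x y : V} (hab : a ≤ b)
    (hx : (tripNodes T)[a]? = some x) (hy : (tripNodes T)[b]? = some y) :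
    ReachB G x y t (t + tripDuration T) := by
  rcases eq_or_lt_of_le hab with rfl | hlt
  · rw [hx] at hy
    exact Or.inl (Option.some.inj hy)
  have hTne : T ≠ [] := by
    rintro rfl
    simp [tripNodes] at hy
  have hbord : b < T.length + 1 := by
    have : b < (tripNodes T).length := (List.getElem?_eq_some_iff.mp hy).1
    rwa [tripNodes_length T hTne] at this
  have hbT : b ≤ T.length := by omega
  have haT : a < T.length := by omega
  set L := tripTEdges T t with hL
  have hLlen : L.length = T.length := tripTEdges_length T t
  have hE : ∀ (i : ℕ) (h : i < T.length),
      L[i]'(by rwa [hLlen]) =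
        ⟨T[i].tail, T[i].head, t + tripDuration (T.take i), T[i].weight⟩ := by
    intro i h
    have := tripTEdges_getElem? T t i
    rw [List.getElem?_eq_getElem (by rwa [hLlen]), List.getElem?_eq_getElem h] at this
    simpa using this
  have hLch : L.Chain' fun e f => e.head = f.tail ∧ e.time + e.travel ≤ f.time := by
    rw [List.Chain', List.isChain_iff_getElem]
    intro i hi
    rw [hLlen] at hi
    rw [hE i (by omega), hE (i + 1) (by omega)]
    refine ⟨?_, ?_⟩
    · have := List.isChain_iff_getElem.mp hch i (by omega)
      simpa using this
    · simp only
      rw [add_assoc, ← tripDuration_take_succ i (by omega)]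
  set p := (L.drop a).take (b - a) with hp
  have hplen : p.length = b - a := by
    simp only [hp, List.length_take, List.length_drop, hLlen]
    omega
  have hpne : p ≠ [] := by
    intro h
    rw [h] at hplen
    simp at hplen
    omega
  have hpmem : ∀ f ∈ p, f ∈ L := fun f hf =>
    List.mem_of_mem_drop (List.mem_of_mem_take hf)
  have hpget : ∀ (i : ℕ) (h : i < b - a), p[i]? = some (L[a + i]'(by rw [hLlen]; omega)) := by
    intro i h
    rw [hp, List.getElem?_take, if_pos h, List.getElem?_drop,
      List.getElem?_eq_getElem (by rw [hLlen]; omega)]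
  refine Or.inr ⟨p, ⟨hpne, fun f hf => hG f (hpmem f hf), ?_, ?_, ?_⟩, ?_⟩
  · exact hLch.infix ⟨L.take a, (L.drop a).drop (b - a), by
      rw [hp, List.append_assoc, List.take_append_drop, List.take_append_drop]⟩
  · rw [List.head?_eq_getElem?, hpget 0 (by omega), Option.map_some]
    rw [hE (a + 0) (by omega)]
    rw [tripNodes_getElem?_tail T a haT] at hx
    simpa using (Option.some.inj hx)
  · rw [List.getLast?_eq_getElem?, hplen, hpget (b - a - 1) (by omega), Option.map_some]
    simp only [show a + (b - a - 1) = b - 1 from by omega]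
    rw [hE (b - 1) (by omega)]
    have hb1 : b - 1 < T.length := by omega
    have hhd := tripNodes_getElem?_head T hch (b - 1) hb1
    rw [(by omega : b - 1 + 1 = b), hy] at hhd
    exact congrArg _ (Option.some.inj hhd).symm
  · intro f hf
    exact tripTEdges_time_bounds hw (hpmem f hf)

/-- A chain of trip-pair node-lists connecting `s` to `t`. -/
def ChainW {ι : Type} (N : ι → List V) : V → V → List ι → Prop
  | s, t, [] => s = t
  | s, t, (j :: J) => ∃ m, s ∈ N j ∧ m ∈ N j ∧ ChainW N m t J

theorem ChainW.snoc {ι : Type} {N : ι → List V} :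
    ∀ {J : List ι} {s u t : V} {j : ι}, ChainW N s u J → u ∈ N j → t ∈ N j →
      ChainW N s t (J ++ [j])
  | [], s, u, t, j, h, hu, ht => by
    subst h
    exact ⟨t, hu, ht, rfl⟩
  | j' :: J, s, u, t, j, ⟨m, hs, hm, hc⟩, hu, ht =>
    ⟨m, hs, hm, hc.snoc hu ht⟩

theorem ChainW.suffix {ι : Type} {N : ι → List V} :
    ∀ {A J : List ι} {s t : V}, ChainW N s t (A ++ J) → ∃ m, ChainW N m t J
  | [], J, s, t, h => ⟨s, h⟩
  | j :: A, J, s, t, ⟨m, _, _, hc⟩ => ChainW.suffix (A := A) hc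

theorem ChainW.dedup {ι : Type} {N : ι → List V} [DecidableEq ι] :
    ∀ {J : List ι} {s t : V}, ChainW N s t J → ∃ J', J'.Nodup ∧ ChainW N s t J'
  | [], s, t, h => ⟨[], List.nodup_nil, h⟩
  | j :: J, s, t, ⟨m, hs, hm, hc⟩ => by
    obtain ⟨J', hnd, hc'⟩ := hc.dedup
    by_cases hj : j ∈ J'
    · obtain ⟨A, B, rfl⟩ := List.append_of_mem hj
      obtain ⟨m', ⟨y, hx, hy, hcB⟩⟩ := ChainW.suffix (A := A) hc'
      exact ⟨j :: B, (hnd.sublist (List.sublist_append_right A (j :: B))),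
        ⟨y, hs, hy, hcB⟩⟩
    · exact ⟨j :: J', List.nodup_cons.mpr ⟨hj, hnd⟩, ⟨m, hs, hm, hc'⟩⟩

/-- Choose a direction of a symmetric pair so that `x` comes before `y`. -/
theorem choose_dir (p : List (DEdge V) × List (DEdge V))
    (hrev : tripNodes p.2 = (tripNodes p.1).reverse) {x y : V}
    (hx : x ∈ tripNodes p.1) (hy : y ∈ tripNodes p.1) :
    ∃ (c : Bool) (a b : ℕ), a ≤ b ∧
      (tripNodes (cond c p.1 p.2))[a]? = some x ∧
      (tripNodes (cond c p.1 p.2))[b]? = some y := by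
  obtain ⟨i, hi, rfl⟩ := List.getElem_of_mem hx
  obtain ⟨i', hi', rfl⟩ := List.getElem_of_mem hy
  rcases le_or_gt i i' with h | h
  · exact ⟨true, i, i', h, by simp [List.getElem?_eq_getElem hi],
      by simp [List.getElem?_eq_getElem hi']⟩
  · set L := (tripNodes p.1).length
    refine ⟨false, L - 1 - i, L - 1 - i', by omega, ?_, ?_⟩
    · rw [show (cond false p.1 p.2) = p.2 from rfl, hrev]
      rw [List.getElem?_reverse (by simpa using (by omega : L - 1 - i < L))]
      rw [show (tripNodes p.1).length - 1 - (L - 1 - i) = i from by omega]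
      exact List.getElem?_eq_getElem hi
    · rw [show (cond false p.1 p.2) = p.2 from rfl, hrev]
      rw [List.getElem?_reverse (by simpa using (by omega : L - 1 - i' < L))]
      rw [show (tripNodes p.1).length - 1 - (L - 1 - i') = i' from by omega]
      exact List.getElem?_eq_getElem hi'

/-- Index correspondence along a permutation. -/
theorem perm_index {α : Type} {l m : List α} (h : l.Perm m) :
    ∃ f : ℕ → ℕ, (∀ i, i < m.length → f i < l.length) ∧
      (∀ i, i < m.length → ∀ j, j < m.length → f i = f j → i = j) ∧
      (∀ i, i < m.length → l[f i]? = m[i]?) := by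
  induction h with
  | nil => exact ⟨id, by simp, by simp, by simp⟩
  | cons x h ih =>
    obtain ⟨f, hlt, hinj, hval⟩ := ih
    refine ⟨fun i => if i = 0 then 0 else f (i - 1) + 1, ?_, ?_, ?_⟩
    · intro i hi
      by_cases h0 : i = 0 <;> simp [h0]
      have := hlt (i - 1) (by simp at hi; omega)
      omega
    · intro i hi j hj hij
      by_cases h0 : i = 0 <;> by_cases h0' : j = 0 <;> simp [h0, h0'] at hij ⊢ <;>
        first
          | omega
          | (have := hinj (i - 1) (by simp at hi; omega) (j - 1) (by simp at hj; omega)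
                (by omega)
             omega)
    · intro i hi
      cases i with
      | zero => simp
      | succ i =>
        simp only [Nat.succ_ne_zero, if_false, Nat.add_sub_cancel]
        rw [List.getElem?_cons_succ, List.getElem?_cons_succ]
        exact hval i (by simpa using hi)
  | swap x y l =>
    refine ⟨fun i => if i = 0 then 1 else if i = 1 then 0 else i, ?_, ?_, ?_⟩
    · intro i hi
      by_cases h0 : i = 0 <;> by_cases h1 : i = 1 <;> simp [h0, h1] at hi ⊢ <;> omega
    · intro i hi j hj hij
      by_cases h0 : i = 0 <;> by_cases h1 : i = 1 <;>
        by_cases h0' : j = 0 <;> by_cases h1' : j = 1 <;>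
        simp [h0, h1, h0', h1'] at hij ⊢ <;> omega
    · intro i hi
      match i with
      | 0 => simp
      | 1 => simp
      | (n + 2) => simp
  | trans h1 h2 ih1 ih2 =>
    obtain ⟨f1, hlt1, hinj1, hval1⟩ := ih1
    obtain ⟨f2, hlt2, hinj2, hval2⟩ := ih2
    refine ⟨f1 ∘ f2, ?_, ?_, ?_⟩
    · intro i hi
      exact hlt1 _ (hlt2 i hi)
    · intro i hi j hj hij
      exact hinj2 i hi j hj (hinj1 _ (hlt2 i hi) _ (hlt2 j hj) hij)
    · intro i hi
      rw [Function.comp_apply, hval1 _ (hlt2 i hi)]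
      exact hval2 i hi

theorem flatMap_pairs_length {α : Type} (ps : List (α × α)) :
    (ps.flatMap fun p => [p.1, p.2]).length = 2 * ps.length := by
  induction ps with
  | nil => rfl
  | cons p ps ih => simp [List.flatMap_cons, ih]; omega

theorem flatMap_pairs_getElem? {α : Type} (ps : List (α × α)) (j : ℕ) (hj : j < ps.length) :
    (ps.flatMap fun p => [p.1, p.2])[2 * j]? = some ps[j].1 ∧
    (ps.flatMap fun p => [p.1, p.2])[2 * j + 1]? = some ps[j].2 := by
  induction ps generalizing j with
  | nil => simp at hj
  | cons p ps ih =>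
    cases j with
    | zero => simp [List.flatMap_cons]
    | succ j =>
      have h2 : 2 * (j + 1) = (2 * j + 1) + 1 := by ring
      rw [h2]
      simp only [List.flatMap_cons, List.cons_append, List.singleton_append,
        List.getElem?_cons_succ]
      have := ih j (by simpa using hj)
      simpa using this

theorem findIdx_eq_of {α : Type} (p : α → Bool) :
    ∀ (l : List α) (i : ℕ) (h : i < l.length), p (l[i]) = true →
      (∀ j (hj : j < i), ¬ p (l[j]'(by omega)) = true) → l.findIdx p = i := by
  intro l
  induction l with
  | nil => intro i h; simp at h
  | cons a l ih =>
    intro i h hp hmin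
    cases i with
    | zero =>
      rw [List.findIdx_cons]
      simp only [List.getElem_cons_zero] at hp
      simp [hp]
    | succ i =>
      have ha : ¬ p a = true := by
        have := hmin 0 (by omega)
        simpa using this
      rw [List.findIdx_cons]
      simp only [ha, cond_false]
      have := ih i (by simpa using h) (by simpa using hp)
        (fun j hj => by
          have := hmin (j + 1) (by omega)
          simpa using this)
      omega

theorem build {trips : List (List (DEdge V))} {ps : List (List (DEdge V) × List (DEdge V))}
    (htrip : ∀ T ∈ trips, IsWalk T ∧ ∀ e ∈ T, 0 < e.weight)
    (hmem : ∀ j : Fin ps.length, (ps.get j).1 ∈ trips ∧ (ps.get j).2 ∈ trips)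
    (hrev : ∀ p ∈ ps, tripNodes p.2 = (tripNodes p.1).reverse)
    (κ : Fin ps.length → Bool → ℕ)
    (hκval : ∀ j b, trips[κ j b]? = some (cond b (ps.get j).1 (ps.get j).2))
    {B C : ℝ} (hB : ∀ T ∈ trips, tripDuration T ≤ B) (hBC : B + 1 ≤ C) (hB0 : 0 ≤ B)
    (τ : ℕ → ℝ) :
    ∀ (J : List (Fin ps.length)) (i0 : ℕ) (s t : V),
      ChainW (fun j => tripNodes (ps.get j).1) s t J →
      (∀ (i : ℕ) (hi : i < J.length) (b : Bool), τ (κ (J.get ⟨i, hi⟩) b) = C * (i0 + i)) →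
      ReachB (inducedTG trips τ) s t (C * i0) (C * (i0 + J.length)) := by
  have hC1 : 1 ≤ C := by linarith
  intro J
  induction J with
  | nil =>
    intro i0 s t hc _
    exact Or.inl hc
  | cons j J ih =>
    rintro i0 s t ⟨m, hs, hm, hc⟩ hτ
    obtain ⟨c, a, b', hab, hxa, hyb⟩ :=
      choose_dir (ps.get j) (hrev _ (ps.get_mem j)) hs hm
    set W := cond c (ps.get j).1 (ps.get j).2 with hW
    have hWtrips : W ∈ trips := by
      cases c
      · exact (hmem j).2
      · exact (hmem j).1
    have hk := hκval j c
    obtain ⟨hklt, hkeq⟩ := List.getElem?_eq_some_iff.mp hk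
    have hτ0 : τ (κ j c) = C * i0 := by
      have := hτ 0 (by simp) c
      simpa using this
    have hG : ∀ f ∈ tripTEdges W (τ (κ j c)), f ∈ inducedTG trips τ := by
      intro f hf
      refine ⟨⟨κ j c, hklt⟩, ?_⟩
      simpa [List.get_eq_getElem, hkeq, hW] using hf
    have hwalk := htrip W hWtrips
    have hseg := segment hG hwalk.1.2 hwalk.2 hab hxa hyb
    rw [hτ0] at hseg
    have hdur := hB W hWtrips
    have hseg' : ReachB (inducedTG trips τ) s m (C * i0) (C * (i0 + 1)) := by
      refine hseg.mono le_rfl ?_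
      have : C * ((i0 : ℝ) + 1) = C * i0 + C := by ring
      rw [this]
      linarith
    have hrest := ih (i0 + 1) m t hc (by
      intro i hi b
      have h2 := hτ (i + 1) (by simpa using Nat.succ_lt_succ hi) b
      have h3 : (j :: J).get ⟨i + 1, by simpa using Nat.succ_lt_succ hi⟩ = J.get ⟨i, hi⟩ := rfl
      rw [h3] at h2
      rw [h2]
      push_cast
      ring)
    have hrest' : ReachB (inducedTG trips τ) m t (C * ((i0 : ℝ) + 1))
        (C * (i0 + (J.length + 1))) := by
      refine (by
        push_cast at hrest ⊢
        convert hrest using 2 <;> ring : ReachB (inducedTG trips τ) m t (C * ((i0 : ℝ) + 1))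
          (C * (i0 + (J.length + 1))))
    have h01 : C * (i0 : ℝ) ≤ C * ((i0 : ℝ) + 1) := by nlinarith [Nat.cast_nonneg (α := ℝ) i0]
    have h12 : C * ((i0 : ℝ) + 1) ≤ C * ((i0 : ℝ) + (J.length + 1)) := by
      have : (0 : ℝ) ≤ J.length := Nat.cast_nonneg _
      nlinarith
    have := ReachB.trans h01 h12 hseg' hrest'
    simpa using this

theorem tpath_to_rtg {step : V → V → Prop} :
    ∀ (p : List (TEdge V)) (u v : V), p ≠ [] →
      (∀ f ∈ p, step f.tail f.head) →
      (p.Chain' fun e f => e.head = f.tail ∧ e.time + e.travel ≤ f.time) →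
      p.head?.map TEdge.tail = some u → p.getLast?.map TEdge.head = some v →
      Relation.ReflTransGen step u v := by
  intro p
  induction p with
  | nil => intro u v h; exact absurd rfl h
  | cons f rest ih =>
    intro u v _ hstep hch hh hl
    have hu : u = f.tail := by simpa using hh.symm
    cases rest with
    | nil =>
      have hv : v = f.head := by simpa using hl.symm
      rw [hu, hv]
      exact Relation.ReflTransGen.single (hstep f (by simp))
    | cons g rest' =>
      obtain ⟨⟨h1, _⟩, hch'⟩ := List.isChain_cons_cons.mp hch
      have htail := ih f.head v (by simp) (fun x hx => hstep x (List.mem_cons_of_mem _ hx))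
        hch' (by simp [h1.symm]) (by simpa using hl)
      rw [hu]
      exact Relation.ReflTransGen.head (hstep f (by simp)) htail

end TempAux

open TempAux

/-- Corollary 1. A symmetric trip network is strongly
temporalisable if and only if its underlying multidigraph is strongly connected. -/
theorem symmetric_stronglyTemporalisable_iff_stronglyConnected
    {V : Type} (trips : List (List (DEdge V)))
    (hN : IsTripNetwork trips) (hsym : IsSymmetricTrips trips) :
    StronglyTemporalisable trips ↔ ∀ u v : V, DReachable trips u v := by
  constructor
  · intro hst u v
    obtain ⟨τ, hre⟩ := hst u v
    rcases hre with rfl | ⟨p, hne, hG, hch, hh, hl⟩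
    · exact Relation.ReflTransGen.refl
    refine tpath_to_rtg p u v hne ?_ hch hh hl
    intro f hf
    obtain ⟨i, hfi⟩ := hG f hf
    obtain ⟨e, he, h1, h2⟩ := tripTEdges_endpoints hfi
    exact ⟨trips.get i, trips.get_mem i, e, he, h1, h2⟩
  · intro hconn s t
    obtain ⟨ps, hperm, hrev⟩ := hsym
    -- membership of pair components in trips
    have hmemF : ∀ p ∈ ps, p.1 ∈ trips ∧ p.2 ∈ trips := by
      intro p hp
      constructor <;>
        [exact hperm.mem_iff.mpr (List.mem_flatMap.mpr ⟨p, hp, by simp⟩);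
         exact hperm.mem_iff.mpr (List.mem_flatMap.mpr ⟨p, hp, by simp⟩)]
    -- each D-step is covered by some pair
    have hstepR : ∀ a b : V, (∃ T ∈ trips, ∃ e ∈ T, e.tail = a ∧ e.head = b) →
        ∃ j : Fin ps.length, a ∈ tripNodes (ps.get j).1 ∧ b ∈ tripNodes (ps.get j).1 := by
      rintro a b ⟨T, hT, e, he, rfl, rfl⟩
      have hTF : T ∈ ps.flatMap fun p => [p.1, p.2] := hperm.mem_iff.mp hT
      obtain ⟨p, hp, hTp⟩ := List.mem_flatMap.mp hTF
      have hwalk := (hN.1 T hT).1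
      have hta : e.tail ∈ tripNodes T := mem_tripNodes_tail he
      have hhb : e.head ∈ tripNodes T := mem_tripNodes_head hwalk.2 he
      obtain ⟨j, hj⟩ := List.mem_iff_get.mp hp
      have hTp' : T = p.1 ∨ T = p.2 := by simpa using hTp
      rcases hTp' with rfl | rfl
      · exact ⟨j, by rw [hj]; exact hta, by rw [hj]; exact hhb⟩
      · have := hrev p hp
        refine ⟨j, ?_, ?_⟩ <;> rw [hj, ← List.mem_reverse, ← this]
        · exact hta
        · exact hhb
    -- turn the D-walk into a chain of pairs
    have hJ : ∃ J, ChainW (fun j : Fin ps.length => tripNodes (ps.get j).1) s t J := by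
      induction hconn s t with
      | refl => exact ⟨[], rfl⟩
      | tail _ hbc ih =>
        obtain ⟨J, hJ⟩ := ih
        obtain ⟨j, h1, h2⟩ := hstepR _ _ hbc
        exact ⟨J ++ [j], hJ.snoc h1 h2⟩
    obtain ⟨J0, hJ0⟩ := hJ
    obtain ⟨J, hnd, hcw⟩ := hJ0.dedup
    -- index correspondence with the flatMap
    obtain ⟨σ, hσlt, hσinj, hσval⟩ := perm_index hperm
    have hFlen : (ps.flatMap fun p => [p.1, p.2]).length = 2 * ps.length :=
      flatMap_pairs_length ps
    set κ : Fin ps.length → Bool → ℕ := fun j b => σ (2 * j.1 + cond b 0 1) with hκ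
    have hκval : ∀ (j : Fin ps.length) (b : Bool),
        trips[κ j b]? = some (cond b (ps.get j).1 (ps.get j).2) := by
      intro j b
      have hlt : 2 * j.1 + cond b 0 1 < (ps.flatMap fun p => [p.1, p.2]).length := by
        rw [hFlen]; cases b <;> simp <;> omega
      have := hσval _ hlt
      rw [hκ]
      rw [this]
      cases b
      · simpa using (flatMap_pairs_getElem? ps j.1 j.isLt).2
      · simpa using (flatMap_pairs_getElem? ps j.1 j.isLt).1
    have hκinj : ∀ (j j' : Fin ps.length) (b b' : Bool), κ j b = κ j' b' → j = j' := by
      intro j j' b b' h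
      have hlt : 2 * j.1 + cond b 0 1 < (ps.flatMap fun p => [p.1, p.2]).length := by
        rw [hFlen]; cases b <;> simp <;> omega
      have hlt' : 2 * j'.1 + cond b' 0 1 < (ps.flatMap fun p => [p.1, p.2]).length := by
        rw [hFlen]; cases b' <;> simp <;> omega
      have := hσinj _ hlt _ hlt' h
      apply Fin.ext
      cases b <;> cases b' <;> simp at this <;> omega
    -- the bound on trip durations
    set B : ℝ := (trips.map fun T => |tripDuration T|).sum with hBdef
    have hB : ∀ T ∈ trips, tripDuration T ≤ B := by
      intro T hT
      refine le_trans (le_abs_self _) ?_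
      exact List.single_le_sum (fun x hx => by
        obtain ⟨S, _, rfl⟩ := List.mem_map.mp hx
        exact abs_nonneg _) _ (List.mem_map_of_mem hT)
    have hB0 : 0 ≤ B := by
      rw [hBdef]
      apply List.sum_nonneg
      intro x hx
      obtain ⟨T, _, rfl⟩ := List.mem_map.mp hx
      exact abs_nonneg _
    set C : ℝ := B + 1 with hCdef
    -- the temporalisation
    set τ : ℕ → ℝ := fun k =>
      C * (J.findIdx fun j => (k == κ j true) || (k == κ j false)) with hτdef
    have hτ : ∀ (i : ℕ) (hi : i < J.length) (b : Bool),
        τ (κ (J.get ⟨i, hi⟩) b) = C * ((0 : ℕ) + i) := by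
      intro i hi b
      simp only [hτdef]
      have hfind : (J.findIdx fun j =>
          (κ (J.get ⟨i, hi⟩) b == κ j true) || (κ (J.get ⟨i, hi⟩) b == κ j false)) = i := by
        apply findIdx_eq_of _ J i hi
        · cases b <;> simp
        · intro j hj hcontra
          simp only [Bool.or_eq_true, beq_iff_eq] at hcontra
          have hjj : J.get ⟨i, hi⟩ = J[j]'(by omega) := by
            rcases hcontra with h | h
            · exact hκinj _ _ _ _ h
            · exact hκinj _ _ _ _ h
          simp only [List.get_eq_getElem] at hjj
          have : i = j := (List.Nodup.getElem_inj_iff hnd).mp hjj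
          omega
      rw [hfind]
      simp
    have hreach := build hN.1 (fun j => hmemF _ (ps.get_mem j)) hrev κ hκval
      hB le_rfl hB0 τ J 0 s t hcw hτ
    refine ⟨τ, ?_⟩
    rcases hreach with h | ⟨p, hp, _⟩
    · exact Or.inl h
    · exact Or.inr ⟨p, hp⟩
end

section
/- Let R be a finite tree whose nodes carry nonnegative real weights summing to K. Then (i) there exists a node c (a weighted centroid) such that every connected component of R with c removed has total weight at most 2K/3; and (ii) if moreover the weight of c is at most 2K/3, then the set of connected components of R with c removed can be partitioned into two parts P₁ and P₂ such that the total weight of the components in P₁ plus the weight of c is at most 2K/3, and the total weight of the components in P₂ is at most 2K/3. -/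
open Classical in
/-- The total weight of the set of nodes satisfying `p`. -/
noncomputable def setWeight {V : Type} [Fintype V] (w : V → ℝ) (p : V → Prop) : ℝ :=
  ∑ x : V, if p x then w x else 0

section aux
variable {V : Type} [Fintype V] (w : V → ℝ)

lemma setWeight_nonneg (hw : ∀ v, 0 ≤ w v) (p : V → Prop) : 0 ≤ setWeight w p := by
  unfold setWeight
  refine Finset.sum_nonneg fun x _ => ?_
  split
  · exact hw x
  · exact le_rfl

lemma setWeight_mono (hw : ∀ v, 0 ≤ w v) {p q : V → Prop} (h : ∀ x, p x → q x) :
    setWeight w p ≤ setWeight w q := by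
  unfold setWeight
  refine Finset.sum_le_sum fun x _ => ?_
  split_ifs with h1 h2 h2
  · exact le_rfl
  · exact absurd (h x h1) h2
  · exact hw x
  · exact le_rfl

lemma setWeight_congr {p q : V → Prop} (h : ∀ x, p x ↔ q x) :
    setWeight w p = setWeight w q := by
  unfold setWeight
  refine Finset.sum_congr rfl fun x _ => ?_
  by_cases hx : p x
  · rw [if_pos hx, if_pos ((h x).1 hx)]
  · rw [if_neg hx, if_neg (fun hq => hx ((h x).2 hq))]

lemma setWeight_add_of_disjoint {p q : V → Prop} (h : ∀ x, ¬(p x ∧ q x)) :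
    setWeight w (fun x => p x ∨ q x) = setWeight w p + setWeight w q := by
  unfold setWeight
  rw [← Finset.sum_add_distrib]
  refine Finset.sum_congr rfl fun x _ => ?_
  by_cases hp : p x
  · rw [if_pos (Or.inl hp), if_pos hp, if_neg (fun hq => h x ⟨hp, hq⟩), add_zero]
  · by_cases hq : q x
    · rw [if_pos (Or.inr hq), if_neg hp, if_pos hq, zero_add]
    · rw [if_neg (fun hx => hx.elim hp hq), if_neg hp, if_neg hq, add_zero]

lemma setWeight_split (p q : V → Prop) :
    setWeight w p = setWeight w (fun x => p x ∧ q x) + setWeight w (fun x => p x ∧ ¬ q x) := by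
  rw [← setWeight_add_of_disjoint w (p := fun x => p x ∧ q x) (q := fun x => p x ∧ ¬ q x)
    (fun x hx => hx.2.2 hx.1.2)]
  exact setWeight_congr w fun x => by by_cases hq : q x <;> tauto

lemma setWeight_finset (F : Finset V) : setWeight w (fun x => x ∈ F) = ∑ x ∈ F, w x := by
  unfold setWeight
  beta_reduce
  rw [← Finset.sum_subset (Finset.subset_univ F) (fun x _ hx => if_neg hx)]
  exact Finset.sum_congr rfl fun x hx => if_pos hx

lemma setWeight_true : setWeight w (fun _ : V => True) = ∑ x : V, w x := by
  unfold setWeight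
  exact Finset.sum_congr rfl fun x _ => if_pos trivial

lemma setWeight_single (v : V) : setWeight w (fun x => x = v) = w v := by
  unfold setWeight
  rw [Finset.sum_eq_single v]
  · rw [if_pos rfl]
  · intro b _ hb; rw [if_neg hb]
  · intro h; exact absurd (Finset.mem_univ v) h

lemma setWeight_le_point (hw : ∀ v, 0 ≤ w v) {p : V → Prop} {v : V} (hv : p v) :
    w v ≤ setWeight w p := by
  unfold setWeight
  classical
  have := Finset.single_le_sum (f := fun x => if p x then w x else 0)
    (fun x _ => by show (0:ℝ) ≤ if p x then w x else 0
                   split; exacts [hw x, le_rfl]) (Finset.mem_univ v)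
  beta_reduce at this
  rwa [if_pos hv] at this

lemma setWeight_pos_elt (hw : ∀ v, 0 ≤ w v) {p : V → Prop} (h : 0 < setWeight w p) :
    ∃ v, p v ∧ 0 < w v := by
  by_contra hc
  push_neg at hc
  refine absurd h (not_lt.2 ?_)
  unfold setWeight
  refine Finset.sum_nonpos fun x _ => ?_
  split_ifs with hx
  · exact le_antisymm (hc x hx) (hw x) ▸ le_rfl
  · exact le_rfl

end aux

section graph
variable {V : Type} {G : SimpleGraph V} {c : V}

lemma rtg_symm : Symmetric (Relation.ReflTransGen (fun a b => G.Adj a b ∧ a ≠ c ∧ b ≠ c)) :=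
  fun a b hab => (@Relation.ReflTransGen.symmetric _ _ ⟨fun _ _ h => ⟨h.1.symm, h.2.2, h.2.1⟩⟩).symm a b hab

lemma rtg_ne {v x : V} (hv : v ≠ c)
    (h : Relation.ReflTransGen (fun a b => G.Adj a b ∧ a ≠ c ∧ b ≠ c) v x) : x ≠ c := by
  induction h with
  | refl => exact hv
  | tail _ h2 _ => exact h2.2.2

lemma rtg_walk {v x : V} (hv : v ≠ c)
    (h : Relation.ReflTransGen (fun a b => G.Adj a b ∧ a ≠ c ∧ b ≠ c) v x) :
    ∃ W : G.Walk v x, c ∉ W.support := by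
  induction h with
  | refl =>
    refine ⟨SimpleGraph.Walk.nil, ?_⟩
    rw [SimpleGraph.Walk.support_nil]
    simp [Ne.symm hv]
  | tail _ h2 ih =>
    obtain ⟨W, hW⟩ := ih
    refine ⟨W.concat h2.1, ?_⟩
    rw [SimpleGraph.Walk.support_concat]
    intro hc
    rcases List.mem_append.mp hc with h | h
    · exact hW h
    · exact h2.2.2 (List.mem_singleton.mp h).symm

lemma walk_rtg {v x : V} (W : G.Walk v x) (hW : c ∉ W.support) :
    Relation.ReflTransGen (fun a b => G.Adj a b ∧ a ≠ c ∧ b ≠ c) v x := by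
  induction W with
  | nil => exact Relation.ReflTransGen.refl
  | cons h W ih =>
    rw [SimpleGraph.Walk.support_cons] at hW
    have h1 : _ ≠ c := fun e => hW (e ▸ List.mem_cons_self)
    have h2 : _ ≠ c := fun e => hW (List.mem_cons_of_mem _ (e ▸ W.start_mem_support))
    exact Relation.ReflTransGen.head ⟨h, h1, h2⟩
      (ih fun hc => hW (List.mem_cons_of_mem _ hc))

lemma tree_path_length (hG : G.IsTree) {a b : V} (p : G.Walk a b) (hp : p.IsPath) :
    p.length = G.dist a b := by
  obtain ⟨q, hq, hql⟩ := hG.isConnected.exists_path_of_dist a b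
  rw [(hG.existsUnique_path a b).unique hp hq, hql]

lemma dist_comp (hG : G.IsTree) {u x : V} (hadj : G.Adj c u) (W : G.Walk u x)
    (hW : c ∉ W.support) : G.dist c x = G.dist u x + 1 := by
  classical
  have hcp : c ∉ (W.toPath : G.Walk u x).support := fun h => hW (W.support_toPath_subset h)
  have hq : (SimpleGraph.Walk.cons hadj (W.toPath : G.Walk u x)).IsPath :=
    (W.toPath.prop).cons hcp
  have h1 := tree_path_length hG _ hq
  have h2 := tree_path_length hG _ W.toPath.prop
  rw [SimpleGraph.Walk.length_cons, h2] at h1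
  omega

end graph

/-- weighted centroid lemma. In a finite node-weighted tree of
total weight `K` there is a node `c` such that every connected component
obtained by removing `c` has weight at most `2K/3`; moreover, if the weight of
`c` is at most `2K/3`, the components can be partitioned into two parts `P₁`
and `P₂` with `w(c) + w(P₁) ≤ 2K/3` and `w(P₂) ≤ 2K/3`.
The connected component of `v ≠ c` after removing `c` is here described by the
reflexive-transitive closure of adjacency avoiding `c`. -/
theorem weighted_centroid
    {V : Type} [Fintype V] (G : SimpleGraph V) (hG : G.IsTree)
    (w : V → ℝ) (hw : ∀ v, 0 ≤ w v) (K : ℝ) (hK : ∑ v : V, w v = K) :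
    ∃ c : V,
      (∀ v : V, v ≠ c →
        setWeight w
          (fun x => Relation.ReflTransGen (fun a b => G.Adj a b ∧ a ≠ c ∧ b ≠ c) v x)
          ≤ 2 * K / 3) ∧
      (w c ≤ 2 * K / 3 →
        ∃ A : Set V, c ∉ A ∧
          (∀ v ∈ A, ∀ x : V,
            Relation.ReflTransGen (fun a b => G.Adj a b ∧ a ≠ c ∧ b ≠ c) v x → x ∈ A) ∧
          w c + setWeight w (fun x => x ∈ A) ≤ 2 * K / 3 ∧
          setWeight w (fun x => x ≠ c ∧ x ∉ A) ≤ 2 * K / 3) := by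
  classical
  have hconn := hG.isConnected
  have hK0 : 0 ≤ K := by rw [← hK]; exact Finset.sum_nonneg fun v _ => hw v
  have hne : Nonempty V := hconn.nonempty
  obtain ⟨c, -, hcmin⟩ := Finset.exists_min_image (Finset.univ : Finset V)
    (fun c => ∑ x : V, w x * (G.dist c x : ℝ)) Finset.univ_nonempty
  -- Part 1, with the stronger bound K/2
  have h1 : ∀ v : V, v ≠ c → setWeight w
      (fun x => Relation.ReflTransGen (fun a b => G.Adj a b ∧ a ≠ c ∧ b ≠ c) v x) ≤ K / 2 := by
    intro v hv
    obtain ⟨W0⟩ := hconn.preconnected c v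
    obtain ⟨u, hadj, q0, hq0⟩ := SimpleGraph.Walk.exists_eq_cons_of_ne (Ne.symm hv)
      (W0.toPath : G.Walk c v)
    have hp : (W0.toPath : G.Walk c v).IsPath := W0.toPath.prop
    rw [hq0, SimpleGraph.Walk.cons_isPath_iff] at hp
    have hRuv : Relation.ReflTransGen (fun a b => G.Adj a b ∧ a ≠ c ∧ b ≠ c) u v :=
      walk_rtg q0 hp.2
    have hucne : u ≠ c := fun e => hp.2 (e ▸ q0.start_mem_support)
    have hiff : ∀ x, Relation.ReflTransGen (fun a b => G.Adj a b ∧ a ≠ c ∧ b ≠ c) v x ↔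
        Relation.ReflTransGen (fun a b => G.Adj a b ∧ a ≠ c ∧ b ≠ c) u x :=
      fun x => ⟨fun h => hRuv.trans h, fun h => (rtg_symm hRuv).trans h⟩
    rw [setWeight_congr w hiff]
    have hpt : ∀ x : V, w x * (G.dist u x : ℝ) ≤ w x * (G.dist c x : ℝ)
        + (w x - 2 * (if Relation.ReflTransGen
            (fun a b => G.Adj a b ∧ a ≠ c ∧ b ≠ c) u x then w x else 0)) := by
      intro x
      by_cases hx : Relation.ReflTransGen (fun a b => G.Adj a b ∧ a ≠ c ∧ b ≠ c) u x
      · obtain ⟨W, hW⟩ := rtg_walk hucne hx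
        have hd := dist_comp hG hadj W hW
        rw [if_pos hx, hd]
        push_cast
        have : w x * ((G.dist u x : ℝ) + 1) = w x * (G.dist u x : ℝ) + w x := by ring
        linarith
      · have hd1 : G.dist u c ≤ 1 := by
          have := SimpleGraph.dist_le (SimpleGraph.Walk.cons hadj.symm SimpleGraph.Walk.nil)
          simpa using this
        have hd : G.dist u x ≤ G.dist c x + 1 := by
          have := hconn.dist_triangle (u := u) (v := c) (w := x)
          omega
        rw [if_neg hx]
        have hdr : (G.dist u x : ℝ) ≤ (G.dist c x : ℝ) + 1 := by exact_mod_cast hd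
        nlinarith [hw x]
    have hmin := hcmin u (Finset.mem_univ u)
    beta_reduce at hmin
    have hsum : (∑ x : V, w x * (G.dist u x : ℝ)) ≤ (∑ x : V, w x * (G.dist c x : ℝ))
        + (K - 2 * setWeight w (fun x => Relation.ReflTransGen
            (fun a b => G.Adj a b ∧ a ≠ c ∧ b ≠ c) u x)) := by
      calc ∑ x : V, w x * (G.dist u x : ℝ)
          ≤ ∑ x : V, (w x * (G.dist c x : ℝ)
            + (w x - 2 * (if Relation.ReflTransGen
                (fun a b => G.Adj a b ∧ a ≠ c ∧ b ≠ c) u x then w x else 0))) :=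
            Finset.sum_le_sum fun x _ => hpt x
        _ = _ := by
            rw [Finset.sum_add_distrib, Finset.sum_sub_distrib, hK, ← Finset.mul_sum]
            unfold setWeight
            beta_reduce
            rfl
    linarith
  refine ⟨c, fun v hv => le_trans (h1 v hv) (by linarith), fun hwc => ?_⟩
  -- Part 2
  set R : V → V → Prop :=
    Relation.ReflTransGen (fun a b => G.Adj a b ∧ a ≠ c ∧ b ≠ c) with hR
  have hRsymm : Symmetric R := hR ▸ rtg_symm
  have hRne : ∀ {v x : V}, v ≠ c → R v x → x ≠ c := fun hv h => rtg_ne hv (hR ▸ h)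
  set good : Finset V → Prop := fun F => c ∉ F ∧ (∀ v ∈ F, ∀ x, R v x → x ∈ F) ∧
    w c + ∑ x ∈ F, w x ≤ 2 * K / 3 with hgood
  have hempty : good ∅ := ⟨Finset.notMem_empty c,
    fun v hv => absurd hv (Finset.notMem_empty v), by simpa using hwc⟩
  obtain ⟨F, hFT, hFmax⟩ := Finset.exists_max_image
    ((Finset.univ : Finset (Finset V)).filter good) (fun F => ∑ x ∈ F, w x)
    ⟨∅, Finset.mem_filter.2 ⟨Finset.mem_univ _, hempty⟩⟩
  obtain ⟨hcF, hFclosed, hFw⟩ : good F := (Finset.mem_filter.1 hFT).2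
  have hFsum : setWeight w (fun x => x ∈ (F : Set V)) = ∑ x ∈ F, w x := by
    rw [← setWeight_finset w F]
    exact setWeight_congr w fun x => by simp
  refine ⟨(F : Set V), by simpa using hcF,
    fun v hv x hx => by exact hFclosed v (by simpa using hv) x hx, ?_, ?_⟩
  · rw [hFsum]; exact hFw
  · by_contra hrest
    push_neg at hrest
    have hFw0 : 0 ≤ ∑ x ∈ F, w x := Finset.sum_nonneg fun x _ => hw x
    -- total weight decomposition
    have d1 : ∀ x : V, ¬((x ∈ F) ∧ (x ≠ c ∧ x ∉ (F : Set V))) := fun x hx =>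
      hx.2.2 (by simpa using hx.1)
    have d2 : ∀ x : V, ¬(x = c ∧ ((x ∈ F) ∨ (x ≠ c ∧ x ∉ (F : Set V)))) := fun x hx =>
      hx.2.elim (fun h => hcF (hx.1 ▸ h)) (fun h => h.1 hx.1)
    have eK : setWeight w (fun _ : V => True) = K := by rw [setWeight_true w, hK]
    have e1 : setWeight w (fun _ : V => True)
        = setWeight w (fun x => x = c ∨ ((x ∈ F) ∨ (x ≠ c ∧ x ∉ (F : Set V)))) :=
      setWeight_congr w (fun x => by
        constructor
        · intro _
          by_cases hxc : x = c
          · exact Or.inl hxc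
          · by_cases hxF : x ∈ F
            · exact Or.inr (Or.inl hxF)
            · exact Or.inr (Or.inr ⟨hxc, by simpa using hxF⟩)
        · intro _; trivial)
    rw [e1, setWeight_add_of_disjoint w (p := fun x => x = c)
        (q := fun x => (x ∈ F) ∨ (x ≠ c ∧ x ∉ (F : Set V))) d2,
      setWeight_add_of_disjoint w (p := fun x => x ∈ F)
        (q := fun x => x ≠ c ∧ x ∉ (F : Set V)) d1,
      setWeight_single, setWeight_finset] at eK
    -- maximality consequence
    have hmaxP : ∀ v : V, v ≠ c → v ∉ F → 0 < w v →
        2 * K / 3 < w c + (∑ x ∈ F, w x) + setWeight w (fun x => R v x) := by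
      intro v hvc hvF hvw
      by_contra hle
      push_neg at hle
      have hsub : ∀ x, R v x → x ≠ c ∧ x ∉ F := fun x hx =>
        ⟨hRne hvc hx, fun hxF => hvF (hFclosed x hxF v (hRsymm hx))⟩
      have hdisj : Disjoint F (Finset.univ.filter (fun x => R v x)) := by
        rw [Finset.disjoint_right]
        intro x hx
        exact fun hxF => (hsub x (Finset.mem_filter.1 hx).2).2 hxF
      have hfiltw : setWeight w (fun x => R v x)
          = ∑ x ∈ Finset.univ.filter (fun x => R v x), w x := by
        rw [← setWeight_finset]
        exact setWeight_congr w fun x => by simp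
      have hgood' : good (F ∪ Finset.univ.filter (fun x => R v x)) := by
        refine ⟨?_, ?_, ?_⟩
        · rw [Finset.mem_union]
          rintro (h | h)
          · exact hcF h
          · exact (hsub c (Finset.mem_filter.1 h).2).1 rfl
        · intro v' hv' x hx
          rw [Finset.mem_union] at hv' ⊢
          rcases hv' with h | h
          · exact Or.inl (hFclosed v' h x hx)
          · exact Or.inr (Finset.mem_filter.2 ⟨Finset.mem_univ _,
              ((Finset.mem_filter.1 h).2).trans hx⟩)
        · rw [Finset.sum_union hdisj, ← hfiltw]
          linarith
      have hle2 := hFmax _ (Finset.mem_filter.2 ⟨Finset.mem_univ _, hgood'⟩)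
      beta_reduce at hle2
      rw [Finset.sum_union hdisj, ← hfiltw] at hle2
      have hwv : w v ≤ setWeight w (fun x => R v x) :=
        setWeight_le_point w hw Relation.ReflTransGen.refl
      linarith
    -- K is positive
    have hKpos : 0 < K := by
      have := setWeight_nonneg w hw (fun x => x ≠ c ∧ x ∉ (F : Set V))
      nlinarith [hw c]
    -- first component
    obtain ⟨v₁, hv₁r, hv₁w⟩ := setWeight_pos_elt w hw
      (p := fun x => x ≠ c ∧ x ∉ (F : Set V)) (by linarith)
    have hv₁F : v₁ ∉ F := by simpa using hv₁r.2
    have hc₁ := hmaxP v₁ hv₁r.1 hv₁F hv₁w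
    have hc₁le : setWeight w (fun x => R v₁ x) ≤ K / 2 := h1 v₁ hv₁r.1
    -- second component
    have hsplit := setWeight_split w (fun x => x ≠ c ∧ x ∉ (F : Set V)) (fun x => R v₁ x)
    have hmono1 : setWeight w (fun x => (x ≠ c ∧ x ∉ (F : Set V)) ∧ R v₁ x)
        ≤ setWeight w (fun x => R v₁ x) := setWeight_mono w hw fun x hx => hx.2
    obtain ⟨v₂, hv₂r, hv₂w⟩ := setWeight_pos_elt w hw
      (p := fun x => (x ≠ c ∧ x ∉ (F : Set V)) ∧ ¬ R v₁ x) (by linarith)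
    have hv₂F : v₂ ∉ F := by simpa using hv₂r.1.2
    have hc₂ := hmaxP v₂ hv₂r.1.1 hv₂F hv₂w
    -- the two components are disjoint and inside the rest
    have hdisj12 : ∀ x : V, ¬(R v₁ x ∧ R v₂ x) := fun x hx =>
      hv₂r.2 (hx.1.trans (hRsymm hx.2))
    have hsub1 : ∀ x, R v₁ x → x ≠ c ∧ x ∉ (F : Set V) := fun x hx =>
      ⟨hRne hv₁r.1 hx, fun hxF => hv₁F (hFclosed x (by simpa using hxF) v₁ (hRsymm hx))⟩
    have hsub2 : ∀ x, R v₂ x → x ≠ c ∧ x ∉ (F : Set V) := fun x hx =>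
      ⟨hRne hv₂r.1.1 hx, fun hxF => hv₂F (hFclosed x (by simpa using hxF) v₂ (hRsymm hx))⟩
    have hcompsum : setWeight w (fun x => R v₁ x) + setWeight w (fun x => R v₂ x)
        ≤ setWeight w (fun x => x ≠ c ∧ x ∉ (F : Set V)) := by
      rw [← setWeight_add_of_disjoint w hdisj12]
      exact setWeight_mono w hw fun x hx => hx.elim (hsub1 x) (hsub2 x)
    linarith
end
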